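/- arXiv:2012.10077 — 4 statements merged into one kernel-verified Lean document; each statement's English description precedes it below -/
import Mathlib

section
/- Under the setting of the two-treatment decomposition theorem (K=2), if treatment effects are constant — Δ^1_{g,t}(D^2_{g,t}) = δ^1 and Δ^{0,1}_{g,t} = δ^2 almost surely for real numbers δ^1, δ^2 — then β_fe = δ^1, i.e., the TWFE estimator β̂_fe is unbiased for the effect of the first treatment. -/
/-!
By the Frisch–Waugh–Lovell theorem, realisation by realisation
`β̂ · Σ N ε D¹ = Σ N ε Y`, where `ε` is the residual of the first-stage regression of `D¹` on
the fixed effects and `D²`. Under constant effects `Y = Y(0,0) + δ¹ D¹ + δ² D²`, and `ε` is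
orthogonal to `D²`, so `β̂ - δ¹ = Σ N ε Y(0,0) / Σ N ε D¹`. Summation by parts in time, using
that `ε` sums to zero within each group, rewrites this as `Σ_k Σ_g ΔY_{g,k}(0,0) · W_{g,k}`,
where the weights `W_{g,k}` are functions of the treatment paths alone (least-squares residuals
are unique) and sum to zero over groups in every period. Independence across groups together
with strong exogeneity makes `ΔY_{g,k}(0,0)` mean-independent of all treatment paths, and
common trends make its mean the same for every group, so each period contributes zero to
`E[β̂] - δ¹`.
-/

open Finset MeasureTheory ProbabilityTheory

theorem Finset.sum_mul_mul_eq_zero_of_forall_le {ι : Type*} (I : Finset ι) (n r x : ι → ℝ)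
    (h : ∀ s : ℝ, ∑ i ∈ I, n i * r i ^ 2 ≤ ∑ i ∈ I, n i * (r i - s * x i) ^ 2) :
    ∑ i ∈ I, n i * (r i * x i) = 0 := by
  set A := ∑ i ∈ I, n i * x i ^ 2
  set B := ∑ i ∈ I, n i * (r i * x i)
  have hquad : ∀ s : ℝ, 0 ≤ A * (s * s) + (-2 * B) * s + 0 := fun s => by
    have hexp : ∑ i ∈ I, n i * (r i - s * x i) ^ 2
        = ∑ i ∈ I, n i * r i ^ 2 + (A * (s * s) + (-2 * B) * s + 0) := by
      simp only [A, B, sum_mul, mul_sum, ← sum_add_distrib, add_zero]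
      exact sum_congr rfl fun i _ => by ring
    linarith [h s]
  have hdisc := discrim_le_zero hquad
  rw [discrim] at hdisc
  nlinarith [sq_nonneg B]

theorem Finset.sum_Icc_mul_eq_add_sum_Ico_sub_mul (a f : ℕ → ℝ) (T : ℕ) :
    ∑ t ∈ Icc 1 T, a t * f t
      = f 1 * ∑ t ∈ Icc 1 T, a t
        + ∑ k ∈ Ico 1 T, (f (k + 1) - f k) * ∑ t ∈ Icc (k + 1) T, a t := by
  have hswap : ∑ k ∈ Ico 1 T, (f (k + 1) - f k) * ∑ t ∈ Icc (k + 1) T, a t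
      = ∑ t ∈ Icc 1 T, ∑ k ∈ Ico 1 t, (f (k + 1) - f k) * a t := by
    simp only [mul_sum]
    exact sum_comm' fun k t => by simp only [mem_Ico, mem_Icc]; omega
  rw [hswap, mul_sum, ← sum_add_distrib]
  refine sum_congr rfl fun t ht => ?_
  rw [← sum_mul, sum_Ico_sub f (mem_Icc.mp ht).1]
  ring

theorem Finset.sum_mul_eq_zero_of_eq {ι : Type*} {s : Finset ι} {c w : ι → ℝ}
    (hc : ∀ i ∈ s, ∀ j ∈ s, c i = c j) (hw : ∑ i ∈ s, w i = 0) :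
    ∑ i ∈ s, c i * w i = 0 := by
  rcases s.eq_empty_or_nonempty with rfl | ⟨j, hj⟩
  · exact sum_empty
  · rw [sum_congr rfl fun i hi => by rw [hc i hi j hj], ← mul_sum, hw, mul_zero]

section TwoWay

variable {G τ : Type*} [Fintype G] (S : Finset τ) (N : G → τ → ℝ)

theorem sum_sum_mul_mul_eq_zero_of_forall_le (r x : G → τ → ℝ)
    (h : ∀ s : ℝ, ∑ g, ∑ t ∈ S, N g t * r g t ^ 2
      ≤ ∑ g, ∑ t ∈ S, N g t * (r g t - s * x g t) ^ 2) :
    ∑ g, ∑ t ∈ S, N g t * (r g t * x g t) = 0 := by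
  simpa only [sum_product] using sum_mul_mul_eq_zero_of_forall_le (univ ×ˢ S)
    (fun p => N p.1 p.2) (fun p => r p.1 p.2) (fun p => x p.1 p.2)
    fun s => by simpa only [sum_product] using h s

def IsTwoWayFEFit (y x : G → τ → ℝ) (a z : ℝ) (c : G → ℝ) (v : τ → ℝ) : Prop :=
  ∀ (a' z' : ℝ) (c' : G → ℝ) (v' : τ → ℝ),
    ∑ g, ∑ t ∈ S, N g t * (y g t - a - c g - v t - z * x g t) ^ 2 ≤
      ∑ g, ∑ t ∈ S, N g t * (y g t - a' - c' g - v' t - z' * x g t) ^ 2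

def IsTwoWayFEFit₂ (y x₁ x₂ : G → τ → ℝ) (a b z : ℝ) (c : G → ℝ) (v : τ → ℝ) : Prop :=
  ∀ (a' b' z' : ℝ) (c' : G → ℝ) (v' : τ → ℝ),
    ∑ g, ∑ t ∈ S, N g t * (y g t - a - c g - v t - b * x₁ g t - z * x₂ g t) ^ 2 ≤
      ∑ g, ∑ t ∈ S, N g t * (y g t - a' - c' g - v' t - b' * x₁ g t - z' * x₂ g t) ^ 2

variable {S N} {y x r : G → τ → ℝ} {a z : ℝ} {c : G → ℝ} {v : τ → ℝ}

namespace IsTwoWayFEFit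

theorem sum_mul_eq_zero (h : IsTwoWayFEFit S N y x a z c v)
    (hr : ∀ g t, r g t = y g t - a - c g - v t - z * x g t)
    (a' z' : ℝ) (c' : G → ℝ) (v' : τ → ℝ) :
    ∑ g, ∑ t ∈ S, N g t * (r g t * (a' + c' g + v' t + z' * x g t)) = 0 :=
  sum_sum_mul_mul_eq_zero_of_forall_le S N r _ fun s => by
    convert h (a + s * a') (z + s * z') (c + s • c') (v + s • v')
      using 4 with g - t -
    · rw [hr]
    · simp only [hr, Pi.add_apply, Pi.smul_apply, smul_eq_mul]; ring

theorem sum_group_eq_zero (h : IsTwoWayFEFit S N y x a z c v)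
    (hr : ∀ g t, r g t = y g t - a - c g - v t - z * x g t) (g : G) :
    ∑ t ∈ S, N g t * r g t = 0 := by
  classical
  simpa [Pi.single_apply] using h.sum_mul_eq_zero hr 0 0 (Pi.single g 1) 0

theorem sum_time_eq_zero (h : IsTwoWayFEFit S N y x a z c v)
    (hr : ∀ g t, r g t = y g t - a - c g - v t - z * x g t) {t : τ} (ht : t ∈ S) :
    ∑ g, N g t * r g t = 0 := by
  classical
  have hfoc := h.sum_mul_eq_zero hr 0 0 0 (Pi.single t 1)
  rw [sum_comm] at hfoc
  simpa [Pi.single_apply, ht] using hfoc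

theorem sum_mul_covariate_eq_zero (h : IsTwoWayFEFit S N y x a z c v)
    (hr : ∀ g t, r g t = y g t - a - c g - v t - z * x g t) :
    ∑ g, ∑ t ∈ S, N g t * (r g t * x g t) = 0 := by
  simpa using h.sum_mul_eq_zero hr 0 1 0 0

theorem residual_eq_of_eqOn {y' x' r' : G → τ → ℝ} {a' z' : ℝ} {c' : G → ℝ}
    {v' : τ → ℝ} (h : IsTwoWayFEFit S N y x a z c v) (h' : IsTwoWayFEFit S N y' x' a' z' c' v')
    (hr : ∀ g t, r g t = y g t - a - c g - v t - z * x g t)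
    (hr' : ∀ g t, r' g t = y' g t - a' - c' g - v' t - z' * x' g t)
    (hN : ∀ g, ∀ t ∈ S, 0 < N g t)
    (hy : ∀ g, ∀ t ∈ S, y g t = y' g t) (hx : ∀ g, ∀ t ∈ S, x g t = x' g t) :
    ∀ g, ∀ t ∈ S, r g t = r' g t := by
  have hsq : ∑ g, ∑ t ∈ S, N g t * (r g t - r' g t) ^ 2 = 0 := by
    have hsplit : ∑ g, ∑ t ∈ S, N g t * (r g t - r' g t) ^ 2
        = ∑ g, ∑ t ∈ S, N g t * (r g t * (a' - a + (c' - c) g + (v' - v) t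
              + (z' - z) * x g t))
          - ∑ g, ∑ t ∈ S, N g t * (r' g t * (a' - a + (c' - c) g + (v' - v) t
              + (z' - z) * x' g t)) := by
      simp only [← sum_sub_distrib]
      refine sum_congr rfl fun g _ => sum_congr rfl fun t ht => ?_
      simp only [hr, hr', Pi.sub_apply, hy g t ht, hx g t ht]
      ring
    rw [hsplit, h.sum_mul_eq_zero hr, h'.sum_mul_eq_zero hr', sub_zero]
  have hnonneg : ∀ g, ∀ t ∈ S, 0 ≤ N g t * (r g t - r' g t) ^ 2 :=
    fun g t ht => mul_nonneg (hN g t ht).le (sq_nonneg _)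
  intro g t ht
  have hgt := (sum_eq_zero_iff_of_nonneg (hnonneg g)).mp
    ((sum_eq_zero_iff_of_nonneg fun g _ => sum_nonneg (hnonneg g)).mp hsq g
      (mem_univ g)) t ht
  rw [mul_eq_zero, sq_eq_zero_iff, sub_eq_zero] at hgt
  exact hgt.resolve_left (hN g t ht).ne'

end IsTwoWayFEFit

theorem IsTwoWayFEFit₂.sum_mul_eq_zero {x₁ x₂ u : G → τ → ℝ} {b : ℝ}
    (h : IsTwoWayFEFit₂ S N y x₁ x₂ a b z c v)
    (hu : ∀ g t, u g t = y g t - a - c g - v t - b * x₁ g t - z * x₂ g t)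
    (a' b' z' : ℝ) (c' : G → ℝ) (v' : τ → ℝ) :
    ∑ g, ∑ t ∈ S, N g t * (u g t * (a' + c' g + v' t + b' * x₁ g t + z' * x₂ g t)) = 0 :=
  sum_sum_mul_mul_eq_zero_of_forall_le S N u _ fun s => by
    convert h (a + s * a') (b + s * b') (z + s * z') (c + s • c') (v + s • v')
      using 4 with g - t -
    · rw [hu]
    · simp only [hu, Pi.add_apply, Pi.smul_apply, smul_eq_mul]; ring

theorem frisch_waugh_lovell {x₁ x₂ : G → τ → ℝ} {α β ζ : ℝ} {γ : G → ℝ} {ν : τ → ℝ}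
    (hreg : IsTwoWayFEFit₂ S N y x₁ x₂ α β ζ γ ν) (hfs : IsTwoWayFEFit S N x₁ x₂ a z c v)
    (hr : ∀ g t, r g t = x₁ g t - a - c g - v t - z * x₂ g t) :
    ∑ g, ∑ t ∈ S, N g t * (r g t * y g t)
      = β * ∑ g, ∑ t ∈ S, N g t * (r g t * x₁ g t) := by
  set u : G → τ → ℝ := fun g t => y g t - α - γ g - ν t - β * x₁ g t - ζ * x₂ g t
  have hur : ∑ g, ∑ t ∈ S, N g t * (u g t * r g t) = 0 := by
    rw [← hreg.sum_mul_eq_zero (fun _ _ => rfl) (-a) 1 (-z) (-c) (-v)]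
    simp only [hr, Pi.neg_apply]
    congr! 4
    ring
  have hfe := hfs.sum_mul_eq_zero hr α ζ γ ν
  calc ∑ g, ∑ t ∈ S, N g t * (r g t * y g t)
      = ∑ g, ∑ t ∈ S, (N g t * (u g t * r g t)
          + N g t * (r g t * (α + γ g + ν t + ζ * x₂ g t)) + β * (N g t * (r g t * x₁ g t))) :=
        sum_congr rfl fun g _ => sum_congr rfl fun t _ => by ring
    _ = β * ∑ g, ∑ t ∈ S, N g t * (r g t * x₁ g t) := by
        simp only [sum_add_distrib, ← mul_sum, hur, hfe, zero_add]

end TwoWay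

theorem eq_add_mul_ite_of_sub_eq {δ₁ δ₂ : ℝ} (f : Bool → Bool → ℝ) (d e : Bool)
    (h₁ : f true e - f false e = δ₁) (h₂ : f false true - f false false = δ₂) :
    f d e = f false false + δ₁ * (if d then 1 else 0) + δ₂ * (if e then 1 else 0) := by
  cases d <;> cases e <;> simp only [if_true, Bool.false_eq_true, if_false] <;> linarith

theorem twoWayFE_coef_eq_add_sum_sub_mul {G : Type*} [Fintype G] {T : ℕ}
    {N y y₀ x₁ x₂ r : G → ℕ → ℝ} {α β ζ a z δ₁ δ₂ : ℝ} {γ c : G → ℝ} {ν v : ℕ → ℝ}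
    (hreg : IsTwoWayFEFit₂ (Icc 1 T) N y x₁ x₂ α β ζ γ ν)
    (hfs : IsTwoWayFEFit (Icc 1 T) N x₁ x₂ a z c v)
    (hr : ∀ g t, r g t = x₁ g t - a - c g - v t - z * x₂ g t)
    (hy : ∀ g, ∀ t ∈ Icc 1 T, y g t = y₀ g t + δ₁ * x₁ g t + δ₂ * x₂ g t)
    (hden : ∑ g, ∑ t ∈ Icc 1 T, N g t * (r g t * x₁ g t) ≠ 0) :
    β = δ₁ + ∑ k ∈ Ico 1 T, ∑ g, (y₀ g (k + 1) - y₀ g k) *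
      ((∑ t ∈ Icc (k + 1) T, N g t * r g t)
        / ∑ g, ∑ t ∈ Icc 1 T, N g t * (r g t * x₁ g t)) := by
  have hy₀ : ∑ g, ∑ t ∈ Icc 1 T, N g t * (r g t * y g t)
      = ∑ g, ∑ t ∈ Icc 1 T, N g t * (r g t * y₀ g t)
        + δ₁ * ∑ g, ∑ t ∈ Icc 1 T, N g t * (r g t * x₁ g t) := by
    have hx₂ := hfs.sum_mul_covariate_eq_zero hr
    calc ∑ g, ∑ t ∈ Icc 1 T, N g t * (r g t * y g t)
        = ∑ g, ∑ t ∈ Icc 1 T, (N g t * (r g t * y₀ g t) + δ₁ * (N g t * (r g t * x₁ g t))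
            + δ₂ * (N g t * (r g t * x₂ g t))) :=
          sum_congr rfl fun g _ => sum_congr rfl fun t ht => by rw [hy g t ht]; ring
      _ = _ := by simp only [sum_add_distrib, ← mul_sum, hx₂, mul_zero, add_zero]
  have habel : ∑ g, ∑ t ∈ Icc 1 T, N g t * (r g t * y₀ g t)
      = ∑ k ∈ Ico 1 T, ∑ g,
          (y₀ g (k + 1) - y₀ g k) * ∑ t ∈ Icc (k + 1) T, N g t * r g t := by
    rw [sum_comm (s := Ico 1 T)]
    refine sum_congr rfl fun g _ => ?_
    simp only [← mul_assoc]
    rw [sum_Icc_mul_eq_add_sum_Ico_sub_mul, hfs.sum_group_eq_zero hr, mul_zero, zero_add]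
  rw [← sub_eq_iff_eq_add', eq_comm]
  simp only [← mul_div_assoc, ← sum_div, ← habel]
  rw [div_eq_iff hden, sub_mul, ← frisch_waugh_lovell hreg hfs hr, hy₀]
  ring

section Probability

variable {Ω : Type*} {m m₁ m₂ mΩ : MeasurableSpace Ω} {μ : Measure Ω}

theorem integral_eq_sum_setIntegral_preimage {V : Type*} [Fintype V] [MeasurableSpace V]
    [MeasurableSingletonClass V] {κ : Ω → V} (hκ : Measurable κ) {f : Ω → ℝ}
    (hf : Integrable f μ) :
    ∫ ω, f ω ∂μ = ∑ v, ∫ ω in κ ⁻¹' {v}, f ω ∂μ := by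
  have hcover : (⋃ v, κ ⁻¹' {v}) = Set.univ :=
    Set.eq_univ_of_forall fun ω => Set.mem_iUnion.mpr ⟨κ ω, rfl⟩
  rw [← integral_iUnion_fintype (fun v => hκ (measurableSet_singleton v))
    (fun v w hvw => (Set.disjoint_singleton.mpr hvw).preimage κ) fun _ => hf.integrableOn,
    hcover, Measure.restrict_univ]

theorem integrable_comp_of_finite [IsFiniteMeasure μ] {V : Type*} [Finite V]
    [MeasurableSpace V] [MeasurableSingletonClass V] {κ : Ω → V} (hκ : Measurable κ) (F : V → ℝ) :
    Integrable (fun ω => F (κ ω)) μ :=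
  (Integrable.of_finite (μ := μ.map κ)).comp_measurable hκ

theorem MeasureTheory.Integrable.mul_comp_of_fintype {V : Type*} [Fintype V]
    [MeasurableSpace V] [MeasurableSingletonClass V] {κ : Ω → V} {f : Ω → ℝ} (hf : Integrable f μ)
    (hκ : Measurable κ) (F : V → ℝ) : Integrable (fun ω => f ω * F (κ ω)) μ :=
  hf.mul_bdd (measurable_of_finite F |>.comp hκ).aestronglyMeasurable (c := ∑ v, ‖F v‖)
    (ae_of_all _ fun ω =>
      single_le_sum (fun v _ => norm_nonneg (F v)) (mem_univ (κ ω)))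

theorem integral_mul_comp_eq_mul_integral_comp [IsFiniteMeasure μ] {V : Type*} [Fintype V]
    [MeasurableSpace V] [MeasurableSingletonClass V] {κ : Ω → V} (hκ : Measurable κ)
    {f : Ω → ℝ} (hf : Integrable f μ) {c : ℝ}
    (h : ∀ v, ∫ ω in κ ⁻¹' {v}, f ω ∂μ = c * μ.real (κ ⁻¹' {v})) (F : V → ℝ) :
    ∫ ω, f ω * F (κ ω) ∂μ = c * ∫ ω, F (κ ω) ∂μ := by
  have hfiber : ∀ (g : Ω → ℝ) v, ∫ ω in κ ⁻¹' {v}, g ω * F (κ ω) ∂μ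
      = (∫ ω in κ ⁻¹' {v}, g ω ∂μ) * F v := fun g v => by
    rw [← integral_mul_const]
    exact setIntegral_congr_fun (hκ (measurableSet_singleton v)) fun ω hω => by
      rw [Set.mem_preimage, Set.mem_singleton_iff] at hω; rw [hω]
  rw [integral_eq_sum_setIntegral_preimage hκ (hf.mul_comp_of_fintype hκ F),
    integral_eq_sum_setIntegral_preimage hκ (integrable_comp_of_finite hκ F),
    mul_sum]
  refine sum_congr rfl fun v _ => ?_
  have hone := hfiber 1 v
  simp only [Pi.one_apply, one_mul, setIntegral_const, smul_eq_mul] at hone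
  rw [hfiber f v, h v, hone]
  ring

theorem setIntegral_inter_eq_mul_of_indep [IsFiniteMeasure μ]
    (hm₁ : m₁ ≤ mΩ) (hm₂ : m₂ ≤ mΩ) (hind : Indep m₁ m₂ μ) {f : Ω → ℝ}
    (hf : StronglyMeasurable[m₁] f) (hfi : Integrable f μ) {A B : Set Ω}
    (hA : MeasurableSet[m₁] A) (hB : MeasurableSet[m₂] B) :
    ∫ ω in A ∩ B, f ω ∂μ = (∫ ω in A, f ω ∂μ) * μ.real B := by
  rw [Set.inter_comm, ← setIntegral_indicator (hm₁ A hA),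
    ← setIntegral_condExp hm₂ (hfi.indicator (hm₁ A hA)) hB,
    setIntegral_congr_ae (hm₂ B hB)
      ((condExp_indep_eq hm₁ hm₂ (hf.indicator hA) hind).mono fun _ h _ => h),
    setIntegral_const, integral_indicator (hm₁ A hA), smul_eq_mul, mul_comm]

theorem integral_mul_comp_eq_of_iIndepFun [IsFiniteMeasure μ] {ι V : Type*} [Fintype ι]
    [Fintype V] [MeasurableSpace V] [MeasurableSingletonClass V] {E : ι → Type*}
    [mE : ∀ i, MeasurableSpace (E i)] {Z : ∀ i, Ω → E i} (hZ : iIndepFun Z μ)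
    (hZm : ∀ i, Measurable (Z i)) {κ : ι → Ω → V}
    (hκ : ∀ i, Measurable[(mE i).comap (Z i)] (κ i)) (hm : m ≤ mΩ) {i : ι}
    (hκm : Measurable[m] (κ i)) {f : Ω → ℝ}
    (hf : StronglyMeasurable[(mE i).comap (Z i)] f) (hfi : Integrable f μ)
    (hexo : μ[f | m] =ᵐ[μ] fun _ => ∫ ω, f ω ∂μ) (F : (ι → V) → ℝ) :
    ∫ ω, f ω * F (fun j => κ j ω) ∂μ = (∫ ω, f ω ∂μ) * ∫ ω, F (fun j => κ j ω) ∂μ := by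
  classical
  have hle : ∀ j, (mE j).comap (Z j) ≤ mΩ := fun j => (hZm j).comap_le
  have hind : Indep ((mE i).comap (Z i)) (⨆ j ∈ ({i}ᶜ : Set ι), (mE j).comap (Z j)) μ := by
    simpa using indep_iSup_of_disjoint hle ((iIndepFun_iff_iIndep _ _ _).mp hZ)
      (disjoint_compl_right : Disjoint ({i} : Set ι) {i}ᶜ)
  refine integral_mul_comp_eq_mul_integral_comp
    (measurable_pi_lambda _ fun j => (hκ j).mono (hle j) le_rfl) hfi (fun v => ?_) F
  set A := κ i ⁻¹' {v i}
  set B := ⋂ j ∈ ({i}ᶜ : Set ι), κ j ⁻¹' {v j}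
  have hAB : (fun ω j => κ j ω) ⁻¹' {v} = A ∩ B := by
    ext ω
    simp only [A, B, Set.mem_preimage, Set.mem_singleton_iff, Set.mem_inter_iff, Set.mem_iInter,
      Set.mem_compl_iff, funext_iff]
    exact ⟨fun h => ⟨h i, fun j _ => h j⟩, fun h j => (em (j = i)).elim (· ▸ h.1) (h.2 j)⟩
  have hA : MeasurableSet[(mE i).comap (Z i)] A := hκ i (measurableSet_singleton _)
  have hB : MeasurableSet[⨆ j ∈ ({i}ᶜ : Set ι), (mE j).comap (Z j)] B :=
    MeasurableSet.biInter (Set.to_countable _) fun j hj =>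
      le_iSup₂ (f := fun j (_ : j ∈ ({i}ᶜ : Set ι)) => (mE j).comap (Z j)) j hj _
        (hκ j (measurableSet_singleton _))
  have hsupB : (⨆ j ∈ ({i}ᶜ : Set ι), (mE j).comap (Z j)) ≤ mΩ := iSup₂_le fun j _ => hle j
  have hexoA : ∫ ω in A, f ω ∂μ = μ.real A * ∫ ω, f ω ∂μ := by
    rw [← setIntegral_condExp hm hfi (hκm (measurableSet_singleton _)),
      setIntegral_congr_ae (hm A (hκm (measurableSet_singleton _))) (hexo.mono fun _ h _ => h),
      setIntegral_const, smul_eq_mul]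
  have hmeasAB : μ.real (A ∩ B) = μ.real A * μ.real B := by
    simpa using setIntegral_inter_eq_mul_of_indep (f := fun _ => (1 : ℝ)) (hle i) hsupB hind
      stronglyMeasurable_const (integrable_const 1) hA hB
  rw [hAB, setIntegral_inter_eq_mul_of_indep (hle i) hsupB hind hf hfi hA hB, hexoA, hmeasAB]
  ring

theorem integral_eq_of_ae_eq_add_sum_mul [IsProbabilityMeasure μ] {ι κ V : Type*} [Fintype ι]
    [Fintype V] [MeasurableSpace V] [MeasurableSingletonClass V] {X : Ω → V}
    (hX : Measurable X) {K : Finset κ} {b : Ω → ℝ} {δ : ℝ} {Δ W : ι → κ → Ω → ℝ}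
    (hb : b =ᵐ[μ] fun ω => δ + ∑ k ∈ K, ∑ g, Δ g k ω * W g k ω)
    (hΔ : ∀ g k, Integrable (Δ g k) μ) (hW : ∀ g k, (W g k).FactorsThrough X)
    (hmean : ∀ g, ∀ k ∈ K, ∀ F : V → ℝ,
      ∫ ω, Δ g k ω * F (X ω) ∂μ = (∫ ω, Δ g k ω ∂μ) * ∫ ω, F (X ω) ∂μ)
    (hcommon : ∀ k ∈ K, ∀ g g', ∫ ω, Δ g k ω ∂μ = ∫ ω, Δ g' k ω ∂μ)
    (hsum : ∀ k ∈ K, ∀ ω, ∑ g, W g k ω = 0) :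
    ∫ ω, b ω ∂μ = δ := by
  classical
  have hWX : ∀ g k, W g k = fun ω => Function.extend X (W g k) 0 (X ω) :=
    fun g k => funext fun ω => ((hW g k).extend_apply 0 ω).symm
  have hWint : ∀ g k, Integrable (W g k) μ := fun g k => by
    rw [hWX]; exact integrable_comp_of_finite hX _
  have hΔW : ∀ g k, Integrable (fun ω => Δ g k ω * W g k ω) μ := fun g k => by
    rw [hWX]; exact (hΔ g k).mul_comp_of_fintype hX _
  have hterm : ∀ k ∈ K, ∑ g, ∫ ω, Δ g k ω * W g k ω ∂μ = 0 := fun k hk => by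
    have hmeanW : ∀ g, ∫ ω, Δ g k ω * W g k ω ∂μ = (∫ ω, Δ g k ω ∂μ) * ∫ ω, W g k ω ∂μ :=
      fun g => by rw [hWX g k]; exact hmean g k hk _
    rw [sum_congr rfl fun g _ => hmeanW g]
    refine sum_mul_eq_zero_of_eq (fun g _ g' _ => hcommon k hk g g') ?_
    rw [← integral_finsetSum _ fun g _ => hWint g k]
    simp [hsum k hk]
  rw [integral_congr_ae hb, integral_add (integrable_const δ)
      (integrable_finsetSum _ fun k _ => integrable_finsetSum _ fun g _ => hΔW g k),
    integral_finsetSum _ fun k _ => integrable_finsetSum _ fun g _ => hΔW g k,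
    sum_congr rfl fun k hk => (integral_finsetSum _ fun g _ => hΔW g k).trans (hterm k hk)]
  simp

end Probability

def treatmentPaths {ι Ω : Type*} (D1 D2 : ι → ℕ → Ω → Bool) (S : Finset ℕ) (ω : Ω) :
    ι → S → Bool × Bool :=
  fun g t => (D1 g t ω, D2 g t ω)

section Panel

variable {ι Ω : Type*} {D1 D2 : ι → ℕ → Ω → Bool}

theorem residual_eq_of_treatmentPaths_eq [Fintype ι] {S : Finset ℕ} {N : ι → ℕ → ℝ}
    (hN : ∀ g, ∀ t ∈ S, 0 < N g t) {d1R d2R : ι → ℕ → Ω → ℝ}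
    (hd1R : ∀ g t ω, d1R g t ω = if D1 g t ω then 1 else 0)
    (hd2R : ∀ g t ω, d2R g t ω = if D2 g t ω then 1 else 0)
    {a0 z0 : Ω → ℝ} {c0 : Ω → ι → ℝ} {v0 : Ω → ℕ → ℝ}
    (hfit : ∀ ω, IsTwoWayFEFit S N (fun g t => d1R g t ω) (fun g t => d2R g t ω)
      (a0 ω) (z0 ω) (c0 ω) (v0 ω))
    {ε : Ω → ι → ℕ → ℝ}
    (hε : ∀ ω g t, ε ω g t = d1R g t ω - a0 ω - c0 ω g - v0 ω t - z0 ω * d2R g t ω)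
    {ω ω' : Ω} (h : treatmentPaths D1 D2 S ω = treatmentPaths D1 D2 S ω') :
    ∀ g, ∀ t ∈ S, ε ω g t = ε ω' g t ∧ d1R g t ω = d1R g t ω' := by
  have hD : ∀ g, ∀ t ∈ S, D1 g t ω = D1 g t ω' ∧ D2 g t ω = D2 g t ω' :=
    fun g t ht => Prod.ext_iff.mp (congrFun (congrFun h g) ⟨t, ht⟩)
  have hd1 : ∀ g, ∀ t ∈ S, d1R g t ω = d1R g t ω' := fun g t ht => by
    rw [hd1R, hd1R, (hD g t ht).1]
  have hd2 : ∀ g, ∀ t ∈ S, d2R g t ω = d2R g t ω' := fun g t ht => by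
    rw [hd2R, hd2R, (hD g t ht).2]
  exact fun g t ht =>
    ⟨(hfit ω).residual_eq_of_eqOn (hfit ω') (hε ω) (hε ω') hN hd1 hd2 g t ht, hd1 g t ht⟩

theorem measurable_treatmentPaths [MeasurableSpace Ω] (hD1 : ∀ g t, Measurable (D1 g t))
    (hD2 : ∀ g t, Measurable (D2 g t)) (S : Finset ℕ) :
    Measurable (treatmentPaths D1 D2 S) :=
  measurable_pi_lambda _ fun g => measurable_pi_lambda _ fun t => (hD1 g t).prodMk (hD2 g t)

theorem integral_sub_mul_comp_treatmentPaths [Fintype ι] [MeasurableSpace Ω] {μ : Measure Ω}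
    [IsFiniteMeasure μ] {po : ι → ℕ → Bool → Bool → Ω → ℝ}
    (hpo : ∀ g t d e, Measurable (po g t d e))
    (hD1 : ∀ g t, Measurable (D1 g t)) (hD2 : ∀ g t, Measurable (D2 g t))
    (hindep : iIndepFun (fun g ω => ((fun t : ℕ => (D1 g t ω, D2 g t ω)),
      (fun (t : ℕ) (d e : Bool) => po g t d e ω))) μ)
    {g : ι} {s t : ℕ}
    (hint : Integrable (fun ω => po g s false false ω - po g t false false ω) μ)
    (hexo : μ[fun ω => po g s false false ω - po g t false false ω |
        MeasurableSpace.comap (fun ω (t : ℕ) => (D1 g t ω, D2 g t ω)) inferInstance]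
      =ᵐ[μ] fun _ => ∫ ω, (po g s false false ω - po g t false false ω) ∂μ)
    (S : Finset ℕ) (F : (ι → S → Bool × Bool) → ℝ) :
    ∫ ω, (po g s false false ω - po g t false false ω) * F (treatmentPaths D1 D2 S ω) ∂μ
      = (∫ ω, (po g s false false ω - po g t false false ω) ∂μ)
        * ∫ ω, F (treatmentPaths D1 D2 S ω) ∂μ := by
  have hZ : ∀ j, Measurable fun ω => ((fun t : ℕ => (D1 j t ω, D2 j t ω)),
      (fun (t : ℕ) (d e : Bool) => po j t d e ω)) := fun j =>
    (measurable_pi_lambda _ fun t => (hD1 j t).prodMk (hD2 j t)).prodMk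
      (measurable_pi_lambda _ fun t => measurable_pi_lambda _ fun d =>
        measurable_pi_lambda _ fun e => hpo j t d e)
  have hrestrict : Measurable fun (p : ℕ → Bool × Bool) (t : S) => p t :=
    measurable_pi_lambda _ fun t => measurable_pi_apply _
  refine integral_mul_comp_eq_of_iIndepFun hindep hZ
    (fun j => (hrestrict.comp measurable_fst).comp (comap_measurable _))
    (Measurable.comap_le (measurable_pi_lambda _ fun t => (hD1 g t).prodMk (hD2 g t)))
    (hrestrict.comp (comap_measurable _)) ?_ hint hexo F
  have hφ : Measurable fun z : (ℕ → Bool × Bool) × (ℕ → Bool → Bool → ℝ) =>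
      z.2 s false false - z.2 t false false := by fun_prop
  exact (hφ.comp (comap_measurable _)).stronglyMeasurable

end Panel

theorem twfe_unbiased_constant_effects_K2_general
    (G T : ℕ)
    {Ω : Type} [inst : MeasurableSpace Ω]
    (μ : Measure Ω) [IsProbabilityMeasure μ]
    (po : Fin G → ℕ → Bool → Bool → Ω → ℝ)
    (hpomeas : ∀ g t d dm, Measurable (po g t d dm))
    (hpoint : ∀ g t d dm, Integrable (po g t d dm) μ)
    (D1 : Fin G → ℕ → Ω → Bool)
    (D2 : Fin G → ℕ → Ω → Bool)
    (hD1meas : ∀ g t, Measurable (D1 g t))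
    (hD2meas : ∀ g t, Measurable (D2 g t))
    (Y : Fin G → ℕ → Ω → ℝ)
    (hY : ∀ g t ω, Y g t ω = po g t (D1 g t ω) (D2 g t ω) ω)
    (mDg : Fin G → MeasurableSpace Ω)
    (hmDg : ∀ g, mDg g = MeasurableSpace.comap
      (fun ω => fun (t : ℕ) => (D1 g t ω, D2 g t ω)) inferInstance)
    -- independent groups
    (hindep : iIndepFun
      (fun (g : Fin G) (ω : Ω) =>
        ((fun (t : ℕ) => (D1 g t ω, D2 g t ω)),
         (fun (t : ℕ) (d d2 : Bool) => po g t d d2 ω))) μ)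
    -- strong exogeneity of the never-treated outcome
    (hexo : ∀ g t, 2 ≤ t → t ≤ T →
      μ[fun ω => po g t false false ω -
          po g (t - 1) false false ω | mDg g]
        =ᵐ[μ] fun _ => ∫ ω, (po g t false false ω -
          po g (t - 1) false false ω) ∂μ)
    -- common trends of the never-treated outcome
    (hct : ∀ g g' t, 2 ≤ t → t ≤ T →
      ∫ ω, (po g t false false ω -
        po g (t - 1) false false ω) ∂μ =
      ∫ ω, (po g' t false false ω -
        po g' (t - 1) false false ω) ∂μ)
    -- weights (number of observations per cell), balanced panel
    (N : Fin G → ℕ → ℝ) (hN : ∀ g t, 0 < N g t)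
    -- real-valued treatments
    (d1R d2R : Fin G → ℕ → Ω → ℝ)
    (hd1R : ∀ g t ω, d1R g t ω = if D1 g t ω then 1 else 0)
    (hd2R : ∀ g t ω, d2R g t ω = if D2 g t ω then 1 else 0)
    -- the TWFE regression: realization-by-realization weighted least squares
    (βhat αhat : Ω → ℝ) (γhat : Ω → Fin G → ℝ) (νhat : Ω → ℕ → ℝ)
    (ζhat : Ω → ℝ)
    (hreg : ∀ ω, ∀ (α' β' ζ' : ℝ) (γ' : Fin G → ℝ) (ν' : ℕ → ℝ),
      ∑ g, ∑ t ∈ Finset.Icc 1 T, N g t * (Y g t ω - αhat ω - γhat ω g - νhat ω t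
        - βhat ω * d1R g t ω - ζhat ω * d2R g t ω) ^ 2 ≤
      ∑ g, ∑ t ∈ Finset.Icc 1 T, N g t * (Y g t ω - α' - γ' g - ν' t
        - β' * d1R g t ω - ζ' * d2R g t ω) ^ 2)
    -- first-stage regression of D¹ on the other regressors, and its residual ε
    (a0 : Ω → ℝ) (c0 : Ω → Fin G → ℝ) (v0 : Ω → ℕ → ℝ) (z0 : Ω → ℝ)
    (hfs : ∀ ω, ∀ (a' z' : ℝ) (c' : Fin G → ℝ) (v' : ℕ → ℝ),
      ∑ g, ∑ t ∈ Finset.Icc 1 T, N g t * (d1R g t ω - a0 ω - c0 ω g - v0 ω t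
        - z0 ω * d2R g t ω) ^ 2 ≤
      ∑ g, ∑ t ∈ Finset.Icc 1 T, N g t * (d1R g t ω - a' - c' g - v' t
        - z' * d2R g t ω) ^ 2)
    (ε : Ω → Fin G → ℕ → ℝ)
    (hε : ∀ ω g t, ε ω g t = d1R g t ω - a0 ω - c0 ω g - v0 ω t
      - z0 ω * d2R g t ω)
    -- number of treated observations, and the normalization of the weights
    (N1 : Ω → ℝ)
    (hN1pos : ∀ ω, 0 < N1 ω)
    (εbar : Ω → ℝ)
    (hεbar : ∀ ω, εbar ω =
      ∑ g, ∑ t ∈ Finset.Icc 1 T, N g t / N1 ω * d1R g t ω * ε ω g t)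
    (hεbarne : ∀ ω, εbar ω ≠ 0)  -- no collinearity
    -- constant treatment effects
    (δ1 δ2 : ℝ)
    (hconst : ∀ᵐ ω ∂μ, ∀ g t, 1 ≤ t → t ≤ T →
      po g t true (D2 g t ω) ω - po g t false (D2 g t ω) ω = δ1 ∧
      po g t false true ω - po g t false false ω = δ2) :
    ∫ ω, βhat ω ∂μ = δ1 := by
  have hfit : ∀ ω, IsTwoWayFEFit (Icc 1 T) N (fun g t => d1R g t ω) (fun g t => d2R g t ω)
      (a0 ω) (z0 ω) (c0 ω) (v0 ω) := hfs
  -- `Δ g k` is the change from `k` to `k + 1`; `hexo` and `hct` index it by `t = k + 1`.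
  set Δ : Fin G → ℕ → Ω → ℝ := fun g k ω =>
    po g (k + 1) false false ω - po g k false false ω
  set D : Ω → ℝ := fun ω => ∑ g, ∑ t ∈ Icc 1 T, N g t * (ε ω g t * d1R g t ω)
  set W : Fin G → ℕ → Ω → ℝ := fun g k ω => (∑ t ∈ Icc (k + 1) T, N g t * ε ω g t) / D ω
  have hD : ∀ ω, D ω ≠ 0 := fun ω => by
    have hDN1 : D ω = N1 ω * εbar ω := by
      simp only [D, hεbar, mul_sum]
      refine sum_congr rfl fun g _ => sum_congr rfl fun t _ => ?_
      field_simp [(hN1pos ω).ne']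
    rw [hDN1]
    exact mul_ne_zero (hN1pos ω).ne' (hεbarne ω)
  have hβ : βhat =ᵐ[μ] fun ω => δ1 + ∑ k ∈ Ico 1 T, ∑ g, Δ g k ω * W g k ω := by
    filter_upwards [hconst] with ω hω
    refine twoWayFE_coef_eq_add_sum_sub_mul (y₀ := fun g t => po g t false false ω)
      (δ₂ := δ2) (hreg ω) (hfit ω) (hε ω) (fun g t ht => ?_) (hD ω)
    obtain ⟨h₁, h₂⟩ := hω g t (mem_Icc.mp ht).1 (mem_Icc.mp ht).2
    rw [hY, hd1R, hd2R]
    exact eq_add_mul_ite_of_sub_eq (fun d e => po g t d e ω) _ _ h₁ h₂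
  have hW : ∀ g k, (W g k).FactorsThrough (treatmentPaths D1 D2 (Icc 1 T)) := by
    intro g k ω ω' h
    have hεd := residual_eq_of_treatmentPaths_eq (fun g t _ => hN g t) hd1R hd2R hfit hε h
    simp only [W, D]
    congr 1
    · exact sum_congr rfl fun t ht =>
        by rw [(hεd g t (Icc_subset_Icc_left (by omega) ht)).1]
    · exact sum_congr rfl fun j _ => sum_congr rfl fun t ht => by
        rw [(hεd j t ht).1, (hεd j t ht).2]
  refine integral_eq_of_ae_eq_add_sum_mul (measurable_treatmentPaths hD1meas hD2meas _) hβ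
    (fun g k => (hpoint g (k + 1) false false).sub (hpoint g k false false)) hW
    (fun g k hk F => ?_) (fun k hk g g' => ?_) (fun k _ ω => ?_)
  · have hk' := mem_Ico.mp hk
    refine integral_sub_mul_comp_treatmentPaths hpomeas hD1meas hD2meas hindep
      ((hpoint g (k + 1) false false).sub (hpoint g k false false)) ?_ _ F
    simpa only [hmDg g, Nat.add_sub_cancel] using hexo g (k + 1) (by omega) (by omega)
  · have hk' := mem_Ico.mp hk
    simpa only [Nat.add_sub_cancel] using hct g g' (k + 1) (by omega) (by omega)
  · simp only [W, ← sum_div]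
    rw [sum_comm, sum_eq_zero fun t ht => (hfit ω).sum_time_eq_zero (hε ω)
      (Icc_subset_Icc_left (by omega) ht), zero_div]

/-- With `K = 2` treatments, under the assumptions of the
two-treatment decomposition theorem, if treatment effects are constant —
`Δ¹_{g,t}(D²_{g,t}) = δ¹` and `Δ^{0,1}_{g,t} = δ²` almost surely — then
`β_fe = E[β̂_fe] = δ¹`: the TWFE estimator is unbiased for the effect of the
first treatment. -/
theorem twfe_unbiased_constant_effects_K2
    (G T : ℕ) (hT : 1 ≤ T)
    {Ω : Type} [inst : MeasurableSpace Ω]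
    (μ : Measure Ω) [IsProbabilityMeasure μ]
    (po : Fin G → ℕ → Bool → Bool → Ω → ℝ)
    (hpomeas : ∀ g t d dm, Measurable (po g t d dm))
    (hpoint : ∀ g t d dm, Integrable (po g t d dm) μ)
    (D1 : Fin G → ℕ → Ω → Bool)
    (D2 : Fin G → ℕ → Ω → Bool)
    (hD1meas : ∀ g t, Measurable (D1 g t))
    (hD2meas : ∀ g t, Measurable (D2 g t))
    (Y : Fin G → ℕ → Ω → ℝ)
    (hY : ∀ g t ω, Y g t ω = po g t (D1 g t ω) (D2 g t ω) ω)
    (mDg : Fin G → MeasurableSpace Ω)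
    (hmDg : ∀ g, mDg g = MeasurableSpace.comap
      (fun ω => fun (t : ℕ) => (D1 g t ω, D2 g t ω)) inferInstance)
    -- independent groups
    (hindep : iIndepFun
      (fun (g : Fin G) (ω : Ω) =>
        ((fun (t : ℕ) => (D1 g t ω, D2 g t ω)),
         (fun (t : ℕ) (d d2 : Bool) => po g t d d2 ω))) μ)
    -- strong exogeneity of the never-treated outcome
    (hexo : ∀ g t, 2 ≤ t → t ≤ T →
      μ[fun ω => po g t false false ω -
          po g (t - 1) false false ω | mDg g]
        =ᵐ[μ] fun _ => ∫ ω, (po g t false false ω -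
          po g (t - 1) false false ω) ∂μ)
    -- common trends of the never-treated outcome
    (hct : ∀ g g' t, 2 ≤ t → t ≤ T →
      ∫ ω, (po g t false false ω -
        po g (t - 1) false false ω) ∂μ =
      ∫ ω, (po g' t false false ω -
        po g' (t - 1) false false ω) ∂μ)
    -- weights (number of observations per cell), balanced panel
    (N : Fin G → ℕ → ℝ) (hN : ∀ g t, 0 < N g t)
    -- real-valued treatments
    (d1R d2R : Fin G → ℕ → Ω → ℝ)
    (hd1R : ∀ g t ω, d1R g t ω = if D1 g t ω then 1 else 0)
    (hd2R : ∀ g t ω, d2R g t ω = if D2 g t ω then 1 else 0)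
    -- the TWFE regression: realization-by-realization weighted least squares
    (βhat αhat : Ω → ℝ) (γhat : Ω → Fin G → ℝ) (νhat : Ω → ℕ → ℝ)
    (ζhat : Ω → ℝ)
    (hreg : ∀ ω, ∀ (α' β' ζ' : ℝ) (γ' : Fin G → ℝ) (ν' : ℕ → ℝ),
      ∑ g, ∑ t ∈ Finset.Icc 1 T, N g t * (Y g t ω - αhat ω - γhat ω g - νhat ω t
        - βhat ω * d1R g t ω - ζhat ω * d2R g t ω) ^ 2 ≤
      ∑ g, ∑ t ∈ Finset.Icc 1 T, N g t * (Y g t ω - α' - γ' g - ν' t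
        - β' * d1R g t ω - ζ' * d2R g t ω) ^ 2)
    -- first-stage regression of D¹ on the other regressors, and its residual ε
    (a0 : Ω → ℝ) (c0 : Ω → Fin G → ℝ) (v0 : Ω → ℕ → ℝ) (z0 : Ω → ℝ)
    (hfs : ∀ ω, ∀ (a' z' : ℝ) (c' : Fin G → ℝ) (v' : ℕ → ℝ),
      ∑ g, ∑ t ∈ Finset.Icc 1 T, N g t * (d1R g t ω - a0 ω - c0 ω g - v0 ω t
        - z0 ω * d2R g t ω) ^ 2 ≤
      ∑ g, ∑ t ∈ Finset.Icc 1 T, N g t * (d1R g t ω - a' - c' g - v' t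
        - z' * d2R g t ω) ^ 2)
    (ε : Ω → Fin G → ℕ → ℝ)
    (hε : ∀ ω g t, ε ω g t = d1R g t ω - a0 ω - c0 ω g - v0 ω t
      - z0 ω * d2R g t ω)
    -- number of treated observations, and the normalization of the weights
    (N1 : Ω → ℝ) (hN1 : ∀ ω, N1 ω = ∑ g, ∑ t ∈ Finset.Icc 1 T, N g t * d1R g t ω)
    (hN1pos : ∀ ω, 0 < N1 ω)
    (εbar : Ω → ℝ)
    (hεbar : ∀ ω, εbar ω =
      ∑ g, ∑ t ∈ Finset.Icc 1 T, N g t / N1 ω * d1R g t ω * ε ω g t)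
    (hεbarne : ∀ ω, εbar ω ≠ 0)  -- no collinearity
    (w : Ω → Fin G → ℕ → ℝ) (hw : ∀ ω g t, w ω g t = ε ω g t / εbar ω)
    -- constant treatment effects
    (δ1 δ2 : ℝ)
    (hconst : ∀ᵐ ω ∂μ, ∀ g t, 1 ≤ t → t ≤ T →
      po g t true (D2 g t ω) ω - po g t false (D2 g t ω) ω = δ1 ∧
      po g t false true ω - po g t false false ω = δ2)
    (hβint : Integrable βhat μ) :
    ∫ ω, βhat ω ∂μ = δ1 :=
  twfe_unbiased_constant_effects_K2_general G T (inst := inst) μ po hpomeas hpoint D1 D2 hD1meas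
    hD2meas Y hY mDg hmDg hindep hexo hct N hN d1R d2R hd1R hd2R βhat αhat γhat νhat ζhat hreg a0 c0
    v0 z0 hfs ε hε N1 hN1pos εbar hεbar hεbarne δ1 δ2 hconst
end

section
/- Let the set 𝒮 of switching cells be 𝒮 = {(g,t): t≥2, D^1_{g,t}≠D^1_{g,t−1}, D^{-1}_{g,t}=D^{-1}_{g,t−1}, and ∃g' with D^1_{g',t}=D^1_{g',t−1}=D^1_{g,t−1} and D^{-1}_{g',t}=D^{-1}_{g',t−1}=D^{-1}_{g,t−1}}, with N_𝒮 = Σ_{(g,t)∈𝒮} N_{g,t}. Suppose strong exogeneity and common trends hold for all potential outcomes: for every 𝐝 ∈ {0,1}^K and t≥2, E[Y_{g,t}(𝐝)−Y_{g,t−1}(𝐝)|𝐃] is a number ψ_{𝐝,t} not depending on g. Then the estimator DID_M defined as the weighted average over t and 𝐝_{−1} of DID_{+,𝐝_{−1},t} (comparing switchers-in to stable cells with the same other treatments) and DID_{−,𝐝_{−1},t} (comparing stable-treated to switchers-out), with weights N_{1,0,𝐝_{−1},t}/N_𝒮 and N_{0,1,𝐝_{−1},t}/N_𝒮, satisfies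 E[DID_M] = δ^𝒮, the average over cells in 𝒮 of the effect of moving treatment 1 from 0 to 1 holding the other treatments fixed. -/
open Finset MeasureTheory
open scoped Classical

/-!
In a cell that moves from `(d', 𝐝₋₁)` to `(d, 𝐝₋₁)`, `Y_{g,t} - Y_{g,t-1}` is the trend
`Y_{g,t}(d', 𝐝₋₁) - Y_{g,t-1}(d', 𝐝₋₁)` plus `Y_{g,t}(d, 𝐝₋₁) - Y_{g,t}(d', 𝐝₋₁)`, which is `±` the
effect of the first treatment for a switcher and `0` for a stable cell. So `DID_M` is the
`δ^𝒮` integrand plus, for each `(t, 𝐝₋₁)`, two DID contrasts between trends of one and the same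
potential outcome. The weights of such a contrast sum to zero and are functions of the
treatments up to `T`, which take finitely many values; by strong exogeneity and common trends
each weighted trend has expectation `ψ` times the expected weight, so every contrast has
expectation zero.
-/

namespace MeasureTheory

variable {Ω α : Type*} {m m₀ : MeasurableSpace Ω} {μ : Measure Ω}

theorem _root_.Function.FactorsThrough.stronglyMeasurable [Finite α] [MeasurableSpace α]
    [MeasurableSingletonClass α] {ρ : Ω → α} (hρ : Measurable[m] ρ) {r : Ω → ℝ}
    (hr : r.FactorsThrough ρ) : StronglyMeasurable[m] r := by
  rw [← hr.extend_comp (fun _ => 0)]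
  exact ((measurable_of_finite _).comp hρ).stronglyMeasurable

theorem _root_.Function.FactorsThrough.exists_norm_le [Finite α] {ρ : Ω → α} {r : Ω → ℝ}
    (hr : r.FactorsThrough ρ) : ∃ C, ∀ ω, ‖r ω‖ ≤ C := by
  obtain ⟨C, hC⟩ := (Set.finite_range fun a => ‖Function.extend ρ r 0 a‖).bddAbove
  exact ⟨C, fun ω => hr.extend_apply 0 ω ▸ hC ⟨ρ ω, rfl⟩⟩

theorem integral_mul_of_condExp_ae_eq_const [IsFiniteMeasure μ] (hm : m ≤ m₀) {r A : Ω → ℝ}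
    (hr : StronglyMeasurable[m] r) {C : ℝ} (hC : ∀ ω, ‖r ω‖ ≤ C) (hA : Integrable A μ) {c : ℝ}
    (hc : μ[A | m] =ᵐ[μ] fun _ => c) :
    ∫ ω, r ω * A ω ∂μ = (∫ ω, r ω ∂μ) * c := by
  have hrA : Integrable (r * A) μ :=
    hA.bdd_mul (hr.mono hm).aestronglyMeasurable (ae_of_all _ hC)
  calc ∫ ω, r ω * A ω ∂μ = ∫ ω, (μ[r * A | m]) ω ∂μ := (integral_condExp hm).symm
    _ = ∫ ω, r ω * c ∂μ := by
      refine integral_congr_ae ?_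
      filter_upwards [condExp_mul_of_stronglyMeasurable_left hr hrA hA, hc] with ω h h'
      rw [h, Pi.mul_apply, h']
    _ = (∫ ω, r ω ∂μ) * c := integral_mul_const c r

theorem integral_sum_mul_eq_zero_of_sum_eq_zero [IsFiniteMeasure μ] (hm : m ≤ m₀) {ι : Type*}
    (s : Finset ι) {w A : ι → Ω → ℝ} (hw : ∀ i ∈ s, StronglyMeasurable[m] (w i))
    (hbdd : ∀ i ∈ s, ∃ C, ∀ ω, ‖w i ω‖ ≤ C) (hsum : ∀ ω, ∑ i ∈ s, w i ω = 0)
    (hA : ∀ i ∈ s, Integrable (A i) μ) {c : ℝ} (hc : ∀ i ∈ s, μ[A i | m] =ᵐ[μ] fun _ => c) :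
    ∫ ω, ∑ i ∈ s, w i ω * A i ω ∂μ = 0 := by
  choose! C hC using hbdd
  have hwA : ∀ i ∈ s, Integrable (fun ω => w i ω * A i ω) μ := fun i hi =>
    (hA i hi).bdd_mul ((hw i hi).mono hm).aestronglyMeasurable (ae_of_all _ (hC i hi))
  have hw_int : ∀ i ∈ s, Integrable (w i) μ := fun i hi =>
    (integrable_const (C i)).mono' ((hw i hi).mono hm).aestronglyMeasurable
      (ae_of_all _ (hC i hi))
  calc ∫ ω, ∑ i ∈ s, w i ω * A i ω ∂μ = ∑ i ∈ s, (∫ ω, w i ω ∂μ) * c := by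
        rw [integral_finsetSum s hwA]
        exact sum_congr rfl fun i hi =>
          integral_mul_of_condExp_ae_eq_const hm (hw i hi) (hC i hi) (hA i hi) (hc i hi)
    _ = 0 := by simp [← sum_mul, ← integral_finsetSum s hw_int, hsum]

end MeasureTheory

namespace DiD

variable {ι : Type*} [Fintype ι] {N : ι → ℝ} {p q : ι → Prop}

noncomputable def mass (N : ι → ℝ) (p : ι → Prop) : ℝ := ∑ i, if p i then N i else 0

noncomputable def didWeight (N : ι → ℝ) (p q : ι → Prop) (i : ι) : ℝ :=
  if mass N p ≠ 0 ∧ mass N q ≠ 0 then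
    (if p i then N i / mass N p else 0) - (if q i then N i / mass N q else 0)
  else 0

theorem mass_ne_zero_iff (hN : ∀ i, 0 < N i) : mass N p ≠ 0 ↔ ∃ i, p i := by
  rw [mass, Ne, sum_eq_zero_iff_of_nonneg fun i _ => by split_ifs <;> simp [(hN i).le]]
  simp [(hN _).ne']

theorem sum_ite_div_mass :
    ∑ i, (if p i then N i / mass N p else 0) = mass N p / mass N p := by
  rw [mass, sum_div]
  exact sum_congr rfl fun i _ => by split_ifs <;> simp

theorem sum_didWeight : ∑ i, didWeight N p q i = 0 := by
  unfold didWeight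
  split_ifs with h
  · rw [sum_sub_distrib, sum_ite_div_mass, sum_ite_div_mass, div_self h.1, div_self h.2, sub_self]
  · simp

theorem didWeight_swap : didWeight N q p = -didWeight N p q := by
  funext i
  simp only [didWeight, Pi.neg_apply, and_comm (a := mass N q ≠ 0)]
  split_ifs <;> ring

theorem ite_sub_eq_sum_didWeight_mul (x : ι → ℝ) :
    (if mass N p ≠ 0 ∧ mass N q ≠ 0 then
        (∑ i, if p i then N i / mass N p * x i else 0)
          - ∑ i, if q i then N i / mass N q * x i else 0
      else 0) = ∑ i, didWeight N p q i * x i := by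
  unfold didWeight
  split_ifs with h
  · rw [← sum_sub_distrib]
    exact sum_congr rfl fun i _ => by split_ifs <;> ring
  · simp

theorem mass_div_mul_sum_didWeight_mul (hpq : ∀ i, p i → ¬q i) {x y τ : ι → ℝ}
    (hp : ∀ i, p i → x i = y i + τ i) (hq : ∀ i, q i → x i = y i) (M : ℝ) :
    mass N p / M * ∑ i, didWeight N p q i * x i
      = ∑ i, mass N p / M * didWeight N p q i * y i
        + ∑ i, if (mass N p ≠ 0 ∧ mass N q ≠ 0) ∧ p i then N i / M * τ i else 0 := by
  rw [mul_sum, ← sum_add_distrib]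
  refine sum_congr rfl fun i _ => ?_
  unfold didWeight
  by_cases hc : mass N p ≠ 0 ∧ mass N q ≠ 0
  · rw [if_pos hc]
    by_cases hpi : p i
    · rw [if_pos hpi, if_neg (hpq i hpi), if_pos ⟨hc, hpi⟩, hp i hpi]
      field_simp [hc.1]
      ring
    · by_cases hqi : q i
      · simp [hpi, hqi, hq i hqi, mul_assoc]
      · simp [hpi, hqi]
  · simp [hc]

theorem mass_div_mul_sum_didWeight_mul' (hpq : ∀ i, p i → ¬q i) {x y τ : ι → ℝ}
    (hp : ∀ i, p i → x i = y i) (hq : ∀ i, q i → x i = y i - τ i) (M : ℝ) :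
    mass N q / M * ∑ i, didWeight N p q i * x i
      = ∑ i, mass N q / M * didWeight N p q i * y i
        + ∑ i, if (mass N p ≠ 0 ∧ mass N q ≠ 0) ∧ q i then N i / M * τ i else 0 := by
  have h := mass_div_mul_sum_didWeight_mul (N := N) (fun i hq hp => hpq i hp hq)
    (τ := -τ) (fun i hi => (hq i hi).trans (sub_eq_add_neg _ _)) hp M
  rw [didWeight_swap] at h
  simp only [Pi.neg_apply, mul_neg, neg_mul, sum_neg_distrib, and_comm (a := mass N q ≠ 0)] at h
  rw [← neg_inj, h, neg_add, ← sum_neg_distrib (s := univ) (f := fun i => ite _ _ _)]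
  congr 1
  exact sum_congr rfl fun i _ => by split_ifs <;> simp

section Integral

variable {Ω α : Type*} {m m₀ : MeasurableSpace Ω} {μ : Measure Ω}

theorem integral_sum_mul_didWeight_mul_eq_zero [Finite α] [MeasurableSpace α]
    [MeasurableSingletonClass α] [IsFiniteMeasure μ] (hm : m ≤ m₀) {ρ : Ω → α}
    (hρ : Measurable[m] ρ) (N : ι → ℝ) {s : Ω → ℝ} {P Q : Ω → ι → Prop}
    (hs : s.FactorsThrough ρ) (hP : P.FactorsThrough ρ) (hQ : Q.FactorsThrough ρ)
    {A : ι → Ω → ℝ} (hA : ∀ i, Integrable (A i) μ) {c : ℝ}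
    (hc : ∀ i, μ[A i | m] =ᵐ[μ] fun _ => c) :
    Integrable (fun ω => ∑ i, s ω * didWeight N (P ω) (Q ω) i * A i ω) μ
      ∧ ∫ ω, ∑ i, s ω * didWeight N (P ω) (Q ω) i * A i ω ∂μ = 0 := by
  have hw : ∀ i, (fun ω => s ω * didWeight N (P ω) (Q ω) i).FactorsThrough ρ :=
    fun i ω ω' h => by simp only [hs h, hP h, hQ h]
  refine ⟨integrable_finsetSum _ fun i _ => ?_, integral_sum_mul_eq_zero_of_sum_eq_zero hm _
    (fun i _ => (hw i).stronglyMeasurable hρ) (fun i _ => (hw i).exists_norm_le)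
    (fun ω => by rw [← mul_sum, sum_didWeight, mul_zero]) (fun i _ => hA i) fun i _ => hc i⟩
  obtain ⟨C, hC⟩ := (hw i).exists_norm_le
  exact (hA i).bdd_mul (((hw i).stronglyMeasurable hρ).mono hm).aestronglyMeasurable
    (ae_of_all _ hC)

end Integral

section Design

variable {G K : ℕ} {Ω : Type*} (D1 : Fin G → ℕ → Ω → Bool) (Dm : Fin G → ℕ → Ω → Fin K → Bool)

def InCell (d d' : Bool) (dm : Fin K → Bool) (t : ℕ) (ω : Ω) (g : Fin G) : Prop :=
  D1 g t ω = d ∧ D1 g (t - 1) ω = d' ∧ Dm g t ω = dm ∧ Dm g (t - 1) ω = dm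

def IsSwitchingCell (T : ℕ) (g : Fin G) (t : ℕ) (ω : Ω) : Prop :=
  2 ≤ t ∧ t ≤ T ∧ D1 g t ω ≠ D1 g (t - 1) ω ∧ Dm g t ω = Dm g (t - 1) ω ∧
    ∃ g', D1 g' t ω = D1 g' (t - 1) ω ∧ D1 g' t ω = D1 g (t - 1) ω ∧
      Dm g' t ω = Dm g' (t - 1) ω ∧ Dm g' t ω = Dm g (t - 1) ω

/-- Unlike the whole treatment process, the treatments up to `T` take finitely many values, so
everything computed from them is measurable and bounded. -/
def treatmentPath (T : ℕ) (ω : Ω) : Fin G → Fin (T + 1) → Bool × (Fin K → Bool) :=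
  fun g s => (D1 g s ω, Dm g s ω)

noncomputable def switcherWeight (N : Fin G → ℕ → ℝ) (t : ℕ) (dm : Fin K → Bool) (ω : Ω)
    (g : Fin G) : ℝ :=
  (if (mass (N · t) (InCell D1 Dm true false dm t ω) ≠ 0 ∧
        mass (N · t) (InCell D1 Dm false false dm t ω) ≠ 0) ∧
      InCell D1 Dm true false dm t ω g then N g t else 0)
    + (if (mass (N · t) (InCell D1 Dm true true dm t ω) ≠ 0 ∧
        mass (N · t) (InCell D1 Dm false true dm t ω) ≠ 0) ∧
      InCell D1 Dm false true dm t ω g then N g t else 0)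

/-- What remains of `N_{1,0,dm,t}/M · DID_{+,dm,t} + N_{0,1,dm,t}/M · DID_{-,dm,t}` once the
switchers' treatment effects are taken out. -/
noncomputable def trendTerm (po : Fin G → ℕ → Bool → (Fin K → Bool) → Ω → ℝ)
    (N : Fin G → ℕ → ℝ) (M : ℝ) (t : ℕ) (dm : Fin K → Bool) (ω : Ω) : ℝ :=
  ∑ g, (mass (N · t) (InCell D1 Dm true false dm t ω) / M
        * didWeight (N · t) (InCell D1 Dm true false dm t ω) (InCell D1 Dm false false dm t ω) g
        * (po g t false dm ω - po g (t - 1) false dm ω)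
      + mass (N · t) (InCell D1 Dm false true dm t ω) / M
        * didWeight (N · t) (InCell D1 Dm true true dm t ω) (InCell D1 Dm false true dm t ω) g
        * (po g t true dm ω - po g (t - 1) true dm ω))

variable {D1 Dm}

theorem comap_treatments_le {m₀ : MeasurableSpace Ω} (hD1 : ∀ g t, Measurable[m₀] (D1 g t))
    (hDm : ∀ g t, Measurable[m₀] (Dm g t)) :
    MeasurableSpace.comap (fun ω => fun (g : Fin G) (t : ℕ) => (D1 g t ω, Dm g t ω))
      inferInstance ≤ m₀ :=
  (measurable_pi_lambda _ fun g => measurable_pi_lambda _ fun t =>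
    (hD1 g t).prodMk (hDm g t)).comap_le

theorem measurable_treatmentPath (T : ℕ) :
    Measurable[MeasurableSpace.comap (fun ω => fun (g : Fin G) (t : ℕ) => (D1 g t ω, Dm g t ω))
      inferInstance] (treatmentPath D1 Dm T) :=
  (show Measurable fun (q : Fin G → ℕ → Bool × (Fin K → Bool)) (g : Fin G) (s : Fin (T + 1)) =>
    q g s by fun_prop).comp (comap_measurable _)

theorem treatments_eq_of_treatmentPath_eq {T : ℕ} {ω ω' : Ω}
    (h : treatmentPath D1 Dm T ω = treatmentPath D1 Dm T ω') {s : ℕ} (hs : s ≤ T) (g : Fin G) :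
    D1 g s ω = D1 g s ω' ∧ Dm g s ω = Dm g s ω' :=
  Prod.ext_iff.mp (congrFun (congrFun h g) ⟨s, Nat.lt_succ_of_le hs⟩)

theorem inCell_factorsThrough {T t : ℕ} (ht : t ≤ T) (d d' : Bool) (dm : Fin K → Bool) :
    (fun ω => InCell D1 Dm d d' dm t ω).FactorsThrough (treatmentPath D1 Dm T) := by
  intro ω ω' h
  funext g
  obtain ⟨h1, h2⟩ := treatments_eq_of_treatmentPath_eq h ht g
  obtain ⟨h3, h4⟩ := treatments_eq_of_treatmentPath_eq h (t.sub_le 1 |>.trans ht) g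
  simp only [InCell, h1, h2, h3, h4]

theorem switchingCells_factorsThrough {T : ℕ} {S : Ω → Finset (Fin G × ℕ)}
    (hS : ∀ ω g t, (g, t) ∈ S ω ↔ IsSwitchingCell D1 Dm T g t ω) :
    S.FactorsThrough (treatmentPath D1 Dm T) := by
  intro ω ω' h
  ext ⟨g, t⟩
  rw [hS, hS]
  refine and_congr_right fun _ => and_congr_right fun ht => ?_
  have h1 := fun g => treatments_eq_of_treatmentPath_eq h ht g
  have h2 := fun g => treatments_eq_of_treatmentPath_eq h (t.sub_le 1 |>.trans ht) g
  simp only [fun g => (h1 g).1, fun g => (h1 g).2, fun g => (h2 g).1, fun g => (h2 g).2]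

theorem sub_eq_of_inCell {po : Fin G → ℕ → Bool → (Fin K → Bool) → Ω → ℝ}
    {Y : Fin G → ℕ → Ω → ℝ} (hY : ∀ g t ω, Y g t ω = po g t (D1 g t ω) (Dm g t ω) ω)
    {d d' : Bool} {dm : Fin K → Bool} {t : ℕ} {ω : Ω} {g : Fin G}
    (h : InCell D1 Dm d d' dm t ω g) :
    Y g t ω - Y g (t - 1) ω
      = (po g t d' dm ω - po g (t - 1) d' dm ω) + (po g t d dm ω - po g t d' dm ω) := by
  obtain ⟨h1, h2, h3, h4⟩ := h
  rw [hY, hY, h1, h2, h3, h4]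
  ring

theorem switcherWeight_eq {N : Fin G → ℕ → ℝ} (hN : ∀ g t, 0 < N g t) {T : ℕ} {ω : Ω}
    {S : Finset (Fin G × ℕ)} (hS : ∀ g t, (g, t) ∈ S ↔ IsSwitchingCell D1 Dm T g t ω)
    {t : ℕ} (ht : t ∈ Icc 2 T) (dm : Fin K → Bool) (g : Fin G) :
    switcherWeight D1 Dm N t dm ω g = if (g, t) ∈ S ∧ Dm g t ω = dm then N g t else 0 := by
  obtain ⟨ht2, htT⟩ := mem_Icc.mp ht
  have hiff : ((mass (N · t) (InCell D1 Dm true false dm t ω) ≠ 0 ∧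
          mass (N · t) (InCell D1 Dm false false dm t ω) ≠ 0) ∧ InCell D1 Dm true false dm t ω g)
      ∨ ((mass (N · t) (InCell D1 Dm true true dm t ω) ≠ 0 ∧
          mass (N · t) (InCell D1 Dm false true dm t ω) ≠ 0) ∧ InCell D1 Dm false true dm t ω g)
      ↔ (g, t) ∈ S ∧ Dm g t ω = dm := by
    simp only [hS, IsSwitchingCell, mass_ne_zero_iff (hN · t), InCell]
    cases h : D1 g t ω <;> cases h' : D1 g (t - 1) ω <;> grind
  rw [switcherWeight, ← if_congr hiff rfl rfl]
  by_cases hin : InCell D1 Dm true false dm t ω g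
  · have hout : ¬InCell D1 Dm false true dm t ω g := fun h => by simpa [hin.1] using h.1
    simp [hin, hout]
  · simp [hin]

theorem sum_switcherWeight_mul {N : Fin G → ℕ → ℝ} (hN : ∀ g t, 0 < N g t) {T : ℕ} {ω : Ω}
    {S : Finset (Fin G × ℕ)} (hS : ∀ g t, (g, t) ∈ S ↔ IsSwitchingCell D1 Dm T g t ω)
    (a : Fin G → ℕ → (Fin K → Bool) → ℝ) :
    ∑ t ∈ Icc 2 T, ∑ dm, ∑ g, switcherWeight D1 Dm N t dm ω g * a g t dm
      = ∑ p ∈ S, N p.1 p.2 * a p.1 p.2 (Dm p.1 p.2 ω) := by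
  have hsub : S ⊆ univ ×ˢ Icc 2 T := fun ⟨g, t⟩ hp => by
    obtain ⟨h2, hT, -⟩ := (hS g t).mp hp
    simp [h2, hT]
  calc _ = ∑ t ∈ Icc 2 T, ∑ g, if (g, t) ∈ S then N g t * a g t (Dm g t ω) else 0 := by
        refine sum_congr rfl fun t ht => ?_
        rw [sum_comm]
        refine sum_congr rfl fun g _ => ?_
        simp_rw [switcherWeight_eq hN hS ht, ite_and, ite_mul, zero_mul]
        simp
    _ = ∑ p ∈ S, N p.1 p.2 * a p.1 p.2 (Dm p.1 p.2 ω) := by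
        rw [← sum_product_right (f := fun p => if p ∈ S then N p.1 p.2 * a p.1 p.2 (Dm p.1 p.2 ω)
          else 0), sum_ite_mem, inter_eq_right.mpr hsub]

theorem weighted_didPlus_add_didMinus_eq {po : Fin G → ℕ → Bool → (Fin K → Bool) → Ω → ℝ}
    {Y : Fin G → ℕ → Ω → ℝ} (hY : ∀ g t ω, Y g t ω = po g t (D1 g t ω) (Dm g t ω) ω)
    (N : Fin G → ℕ → ℝ) (M : ℝ) (t : ℕ) (dm : Fin K → Bool) (ω : Ω) :
    mass (N · t) (InCell D1 Dm true false dm t ω) / M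
        * ∑ g, didWeight (N · t) (InCell D1 Dm true false dm t ω)
          (InCell D1 Dm false false dm t ω) g * (Y g t ω - Y g (t - 1) ω)
      + mass (N · t) (InCell D1 Dm false true dm t ω) / M
        * ∑ g, didWeight (N · t) (InCell D1 Dm true true dm t ω)
          (InCell D1 Dm false true dm t ω) g * (Y g t ω - Y g (t - 1) ω)
      = ∑ g, switcherWeight D1 Dm N t dm ω g * ((po g t true dm ω - po g t false dm ω) / M)
        + trendTerm D1 Dm po N M t dm ω := by
  have hdisj : ∀ {d₁ d₂ d d' : Bool} (g : Fin G), d₁ ≠ d₂ →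
      InCell D1 Dm d₁ d dm t ω g → ¬InCell D1 Dm d₂ d' dm t ω g :=
    fun _ hne h h' => hne (h.1.symm.trans h'.1)
  rw [mass_div_mul_sum_didWeight_mul (fun g => hdisj g (by decide))
      (fun g h => sub_eq_of_inCell hY h)
      (fun g h => by rw [sub_eq_of_inCell hY h, sub_self, add_zero]),
    mass_div_mul_sum_didWeight_mul' (y := fun g => po g t true dm ω - po g (t - 1) true dm ω)
      (τ := fun g => po g t true dm ω - po g t false dm ω) (fun g => hdisj g (by decide))
      (fun g h => by rw [sub_eq_of_inCell hY h, sub_self, add_zero])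
      (fun g h => by rw [sub_eq_of_inCell hY h]; ring)]
  simp only [switcherWeight, trendTerm, ← sum_add_distrib]
  exact sum_congr rfl fun g _ => by split_ifs <;> ring

theorem sum_sum_weighted_did_eq {po : Fin G → ℕ → Bool → (Fin K → Bool) → Ω → ℝ}
    {Y : Fin G → ℕ → Ω → ℝ} (hY : ∀ g t ω, Y g t ω = po g t (D1 g t ω) (Dm g t ω) ω)
    {N : Fin G → ℕ → ℝ} (hN : ∀ g t, 0 < N g t) {T : ℕ} {ω : Ω} {S : Finset (Fin G × ℕ)}
    (hS : ∀ g t, (g, t) ∈ S ↔ IsSwitchingCell D1 Dm T g t ω) (M : ℝ) :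
    ∑ t ∈ Icc 2 T, ∑ dm,
      (mass (N · t) (InCell D1 Dm true false dm t ω) / M
          * ∑ g, didWeight (N · t) (InCell D1 Dm true false dm t ω)
            (InCell D1 Dm false false dm t ω) g * (Y g t ω - Y g (t - 1) ω)
        + mass (N · t) (InCell D1 Dm false true dm t ω) / M
          * ∑ g, didWeight (N · t) (InCell D1 Dm true true dm t ω)
            (InCell D1 Dm false true dm t ω) g * (Y g t ω - Y g (t - 1) ω))
      = 1 / M * ∑ p ∈ S, N p.1 p.2 *
          (po p.1 p.2 true (Dm p.1 p.2 ω) ω - po p.1 p.2 false (Dm p.1 p.2 ω) ω)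
        + ∑ t ∈ Icc 2 T, ∑ dm, trendTerm D1 Dm po N M t dm ω := by
  rw [sum_congr rfl fun t _ => sum_congr rfl fun dm _ =>
      weighted_didPlus_add_didMinus_eq hY N M t dm ω,
    sum_congr rfl fun t _ => sum_add_distrib, sum_add_distrib,
    sum_switcherWeight_mul hN hS fun g t dm => (po g t true dm ω - po g t false dm ω) / M, mul_sum]
  congr 1
  exact sum_congr rfl fun p _ => by ring

theorem integral_sum_sum_trendTerm_eq_zero {m m₀ : MeasurableSpace Ω} {μ : Measure Ω}
    [IsFiniteMeasure μ] (hm : m ≤ m₀) {T : ℕ} (hρ : Measurable[m] (treatmentPath D1 Dm T))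
    {M : Ω → ℝ} (hM : M.FactorsThrough (treatmentPath D1 Dm T))
    {po : Fin G → ℕ → Bool → (Fin K → Bool) → Ω → ℝ}
    (hpo : ∀ g t d dm, Integrable (po g t d dm) μ) {ψ : Bool → (Fin K → Bool) → ℕ → ℝ}
    (hψ : ∀ d dm t, 2 ≤ t → t ≤ T → ∀ g,
      μ[fun ω => po g t d dm ω - po g (t - 1) d dm ω | m] =ᵐ[μ] fun _ => ψ d dm t)
    (N : Fin G → ℕ → ℝ) :
    Integrable (fun ω => ∑ t ∈ Icc 2 T, ∑ dm, trendTerm D1 Dm po N (M ω) t dm ω) μ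
      ∧ ∫ ω, ∑ t ∈ Icc 2 T, ∑ dm, trendTerm D1 Dm po N (M ω) t dm ω ∂μ = 0 := by
  have hterm : ∀ t ∈ Icc 2 T, ∀ dm, Integrable (fun ω => trendTerm D1 Dm po N (M ω) t dm ω) μ
      ∧ ∫ ω, trendTerm D1 Dm po N (M ω) t dm ω ∂μ = 0 := by
    intro t ht dm
    obtain ⟨ht2, htT⟩ := mem_Icc.mp ht
    have hscale : ∀ d d', (fun ω => mass (N · t) (InCell D1 Dm d d' dm t ω) / M ω).FactorsThrough
        (treatmentPath D1 Dm T) := fun d d' ω ω' h => by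
      simp only [inCell_factorsThrough htT d d' dm h, hM h]
    have hcontrast := fun (d d' dS : Bool) => integral_sum_mul_didWeight_mul_eq_zero hm hρ
      (N · t) (hscale d d') (inCell_factorsThrough htT true dS dm)
      (inCell_factorsThrough htT false dS dm)
      (A := fun g ω => po g t dS dm ω - po g (t - 1) dS dm ω)
      (fun g => (hpo g t dS dm).sub (hpo g (t - 1) dS dm)) (hψ dS dm t ht2 htT)
    obtain ⟨hint₀, hzero₀⟩ := hcontrast true false false
    obtain ⟨hint₁, hzero₁⟩ := hcontrast false true true
    simp only [trendTerm, sum_add_distrib]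
    exact ⟨hint₀.add hint₁, by rw [integral_add hint₀ hint₁, hzero₀, hzero₁, add_zero]⟩
  refine ⟨integrable_finsetSum _ fun t ht => integrable_finsetSum _ fun dm _ => (hterm t ht dm).1,
    ?_⟩
  rw [integral_finsetSum _ fun t ht => integrable_finsetSum _ fun dm _ => (hterm t ht dm).1]
  refine sum_eq_zero fun t ht => ?_
  rw [integral_finsetSum _ fun dm _ => (hterm t ht dm).1]
  exact sum_eq_zero fun dm _ => (hterm t ht dm).2

end Design

end DiD

open DiD

theorem DIDM_unbiased_several_treatments_general
    (G T Km1 : ℕ)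
    {Ω : Type} [inst : MeasurableSpace Ω]
    (μ : Measure Ω) [IsProbabilityMeasure μ]
    (po : Fin G → ℕ → Bool → (Fin Km1 → Bool) → Ω → ℝ)
    (hpoint : ∀ g t d dm, Integrable (po g t d dm) μ)
    (D1 : Fin G → ℕ → Ω → Bool) (Dm : Fin G → ℕ → Ω → Fin Km1 → Bool)
    (hD1meas : ∀ g t, Measurable (D1 g t)) (hDmmeas : ∀ g t, Measurable (Dm g t))
    (Y : Fin G → ℕ → Ω → ℝ)
    (hY : ∀ g t ω, Y g t ω = po g t (D1 g t ω) (Dm g t ω) ω)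
    (mD : MeasurableSpace Ω)
    (hmD : mD = MeasurableSpace.comap
      (fun ω => fun (g : Fin G) (t : ℕ) => (D1 g t ω, Dm g t ω)) inferInstance)
    -- strong exogeneity and common trends for all potential outcomes
    (ψ : Bool → (Fin Km1 → Bool) → ℕ → ℝ)
    (hψ : ∀ (d : Bool) (dm : Fin Km1 → Bool) (t : ℕ), 2 ≤ t → t ≤ T → ∀ g,
      μ[fun ω => po g t d dm ω - po g (t - 1) d dm ω | mD]
        =ᵐ[μ] fun _ => ψ d dm t)
    (N : Fin G → ℕ → ℝ) (hN : ∀ g t, 0 < N g t)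
    -- the set 𝒮 of switching cells with a matched stable group
    (S : Ω → Finset (Fin G × ℕ))
    (hS : ∀ ω g t, (g, t) ∈ S ω ↔ (2 ≤ t ∧ t ≤ T ∧
      D1 g t ω ≠ D1 g (t - 1) ω ∧ Dm g t ω = Dm g (t - 1) ω ∧
      ∃ g', D1 g' t ω = D1 g' (t - 1) ω ∧ D1 g' t ω = D1 g (t - 1) ω ∧
        Dm g' t ω = Dm g' (t - 1) ω ∧ Dm g' t ω = Dm g (t - 1) ω))
    (NS : Ω → ℝ) (hNS : ∀ ω, NS ω = ∑ p ∈ S ω, N p.1 p.2)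
    -- cell counts N_{d,d',𝐝₋₁,t}
    (Ncnt : Bool → Bool → (Fin Km1 → Bool) → ℕ → Ω → ℝ)
    (hNcnt : ∀ d d' dm t ω, Ncnt d d' dm t ω = ∑ g,
      if D1 g t ω = d ∧ D1 g (t - 1) ω = d' ∧
        Dm g t ω = dm ∧ Dm g (t - 1) ω = dm then N g t else 0)
    -- DID⁺ and DID⁻, with the convention that they are 0 when undefined
    (DIDp DIDm : (Fin Km1 → Bool) → ℕ → Ω → ℝ)
    (hDIDp : ∀ dm t ω, DIDp dm t ω =
      if Ncnt true false dm t ω ≠ 0 ∧ Ncnt false false dm t ω ≠ 0 then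
        (∑ g, if D1 g t ω = true ∧ D1 g (t - 1) ω = false ∧
            Dm g t ω = dm ∧ Dm g (t - 1) ω = dm then
          N g t / Ncnt true false dm t ω * (Y g t ω - Y g (t - 1) ω) else 0)
        - (∑ g, if D1 g t ω = false ∧ D1 g (t - 1) ω = false ∧
            Dm g t ω = dm ∧ Dm g (t - 1) ω = dm then
          N g t / Ncnt false false dm t ω * (Y g t ω - Y g (t - 1) ω) else 0)
      else 0)
    (hDIDm : ∀ dm t ω, DIDm dm t ω =
      if Ncnt true true dm t ω ≠ 0 ∧ Ncnt false true dm t ω ≠ 0 then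
        (∑ g, if D1 g t ω = true ∧ D1 g (t - 1) ω = true ∧
            Dm g t ω = dm ∧ Dm g (t - 1) ω = dm then
          N g t / Ncnt true true dm t ω * (Y g t ω - Y g (t - 1) ω) else 0)
        - (∑ g, if D1 g t ω = false ∧ D1 g (t - 1) ω = true ∧
            Dm g t ω = dm ∧ Dm g (t - 1) ω = dm then
          N g t / Ncnt false true dm t ω * (Y g t ω - Y g (t - 1) ω) else 0)
      else 0)
    -- the DID_M estimator
    (DIDM : Ω → ℝ)
    (hDIDM : ∀ ω, DIDM ω =
      if NS ω ≠ 0 then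
        ∑ t ∈ Finset.Icc 2 T, ∑ dm : Fin Km1 → Bool,
          (Ncnt true false dm t ω / NS ω * DIDp dm t ω
            + Ncnt false true dm t ω / NS ω * DIDm dm t ω)
      else 0)
    -- the target parameter δ^𝒮
    (δS : ℝ)
    (hδS : δS = ∫ ω, (if NS ω ≠ 0 then
      (1 / NS ω) * ∑ p ∈ S ω, N p.1 p.2 *
        (po p.1 p.2 true (Dm p.1 p.2 ω) ω - po p.1 p.2 false (Dm p.1 p.2 ω) ω)
      else 0) ∂μ)
    (hδSint : Integrable (fun ω => if NS ω ≠ 0 then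
      (1 / NS ω) * ∑ p ∈ S ω, N p.1 p.2 *
        (po p.1 p.2 true (Dm p.1 p.2 ω) ω - po p.1 p.2 false (Dm p.1 p.2 ω) ω)
      else 0) μ) :
    ∫ ω, DIDM ω ∂μ = δS := by
  have hm : mD ≤ inst := hmD ▸ comap_treatments_le hD1meas hDmmeas
  have hρ : Measurable[mD] (treatmentPath D1 Dm T) := hmD ▸ measurable_treatmentPath T
  have hNSρ : NS.FactorsThrough (treatmentPath D1 Dm T) := fun ω ω' h => by
    rw [hNS, hNS, switchingCells_factorsThrough hS h]
  have hNcnt' : ∀ d d' dm t ω, Ncnt d d' dm t ω = mass (N · t) (InCell D1 Dm d d' dm t ω) :=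
    fun d d' dm t ω => (hNcnt d d' dm t ω).trans (sum_congr rfl fun _ _ => if_congr Iff.rfl rfl rfl)
  have hDIDp' : ∀ dm t ω, DIDp dm t ω = ∑ g, didWeight (N · t) (InCell D1 Dm true false dm t ω)
      (InCell D1 Dm false false dm t ω) g * (Y g t ω - Y g (t - 1) ω) := fun dm t ω => by
    rw [hDIDp, hNcnt', hNcnt']
    convert ite_sub_eq_sum_didWeight_mul _ using 5 <;> rfl
  have hDIDm' : ∀ dm t ω, DIDm dm t ω = ∑ g, didWeight (N · t) (InCell D1 Dm true true dm t ω)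
      (InCell D1 Dm false true dm t ω) g * (Y g t ω - Y g (t - 1) ω) := fun dm t ω => by
    rw [hDIDm, hNcnt', hNcnt']
    convert ite_sub_eq_sum_didWeight_mul _ using 5 <;> rfl
  have hdecomp : ∀ ω, DIDM ω = (if NS ω ≠ 0 then (1 / NS ω) * ∑ p ∈ S ω, N p.1 p.2 *
        (po p.1 p.2 true (Dm p.1 p.2 ω) ω - po p.1 p.2 false (Dm p.1 p.2 ω) ω) else 0)
      + ∑ t ∈ Icc 2 T, ∑ dm, trendTerm D1 Dm po N (NS ω) t dm ω := by
    intro ω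
    by_cases h0 : NS ω = 0
    · -- every weight `· / N_𝒮` is then `0` by the convention `x / 0 = 0`
      simp [hDIDM, h0, trendTerm]
    · rw [hDIDM, if_pos h0, if_pos h0, ← sum_sum_weighted_did_eq hY hN (hS ω)]
      simp only [hDIDp', hDIDm', hNcnt']
  obtain ⟨htrend_int, htrend⟩ := integral_sum_sum_trendTerm_eq_zero hm hρ hNSρ hpoint hψ N
  rw [integral_congr_ae (ae_of_all _ hdecomp), integral_add hδSint htrend_int, htrend, add_zero,
    hδS]

/-- Unbiasedness of the `DID_M` estimator with several treatments
(Theorem 3). In a sharp design with `K` binary treatments, under strong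
exogeneity and common trends for all potential outcomes (conditionally on all
treatments `𝐃`, the trend of every potential outcome is a constant `ψ` not
depending on `g`), the expectation of `DID_M` equals `δ^𝒮`, the average effect
across switching cells `𝒮` of moving the first treatment from 0 to 1 holding
the other treatments fixed. -/
theorem DIDM_unbiased_several_treatments
    (G T Km1 : ℕ) (hT : 2 ≤ T)
    {Ω : Type} [inst : MeasurableSpace Ω]
    (μ : Measure Ω) [IsProbabilityMeasure μ]
    (po : Fin G → ℕ → Bool → (Fin Km1 → Bool) → Ω → ℝ)
    (hpomeas : ∀ g t d dm, Measurable (po g t d dm))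
    (hpoint : ∀ g t d dm, Integrable (po g t d dm) μ)
    (D1 : Fin G → ℕ → Ω → Bool) (Dm : Fin G → ℕ → Ω → Fin Km1 → Bool)
    (hD1meas : ∀ g t, Measurable (D1 g t)) (hDmmeas : ∀ g t, Measurable (Dm g t))
    (Y : Fin G → ℕ → Ω → ℝ)
    (hY : ∀ g t ω, Y g t ω = po g t (D1 g t ω) (Dm g t ω) ω)
    (mD : MeasurableSpace Ω)
    (hmD : mD = MeasurableSpace.comap
      (fun ω => fun (g : Fin G) (t : ℕ) => (D1 g t ω, Dm g t ω)) inferInstance)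
    -- strong exogeneity and common trends for all potential outcomes
    (ψ : Bool → (Fin Km1 → Bool) → ℕ → ℝ)
    (hψ : ∀ (d : Bool) (dm : Fin Km1 → Bool) (t : ℕ), 2 ≤ t → t ≤ T → ∀ g,
      μ[fun ω => po g t d dm ω - po g (t - 1) d dm ω | mD]
        =ᵐ[μ] fun _ => ψ d dm t)
    (N : Fin G → ℕ → ℝ) (hN : ∀ g t, 0 < N g t)
    -- the set 𝒮 of switching cells with a matched stable group
    (S : Ω → Finset (Fin G × ℕ))
    (hS : ∀ ω g t, (g, t) ∈ S ω ↔ (2 ≤ t ∧ t ≤ T ∧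
      D1 g t ω ≠ D1 g (t - 1) ω ∧ Dm g t ω = Dm g (t - 1) ω ∧
      ∃ g', D1 g' t ω = D1 g' (t - 1) ω ∧ D1 g' t ω = D1 g (t - 1) ω ∧
        Dm g' t ω = Dm g' (t - 1) ω ∧ Dm g' t ω = Dm g (t - 1) ω))
    (NS : Ω → ℝ) (hNS : ∀ ω, NS ω = ∑ p ∈ S ω, N p.1 p.2)
    -- cell counts N_{d,d',𝐝₋₁,t}
    (Ncnt : Bool → Bool → (Fin Km1 → Bool) → ℕ → Ω → ℝ)
    (hNcnt : ∀ d d' dm t ω, Ncnt d d' dm t ω = ∑ g,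
      if D1 g t ω = d ∧ D1 g (t - 1) ω = d' ∧
        Dm g t ω = dm ∧ Dm g (t - 1) ω = dm then N g t else 0)
    -- DID⁺ and DID⁻, with the convention that they are 0 when undefined
    (DIDp DIDm : (Fin Km1 → Bool) → ℕ → Ω → ℝ)
    (hDIDp : ∀ dm t ω, DIDp dm t ω =
      if Ncnt true false dm t ω ≠ 0 ∧ Ncnt false false dm t ω ≠ 0 then
        (∑ g, if D1 g t ω = true ∧ D1 g (t - 1) ω = false ∧
            Dm g t ω = dm ∧ Dm g (t - 1) ω = dm then
          N g t / Ncnt true false dm t ω * (Y g t ω - Y g (t - 1) ω) else 0)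
        - (∑ g, if D1 g t ω = false ∧ D1 g (t - 1) ω = false ∧
            Dm g t ω = dm ∧ Dm g (t - 1) ω = dm then
          N g t / Ncnt false false dm t ω * (Y g t ω - Y g (t - 1) ω) else 0)
      else 0)
    (hDIDm : ∀ dm t ω, DIDm dm t ω =
      if Ncnt true true dm t ω ≠ 0 ∧ Ncnt false true dm t ω ≠ 0 then
        (∑ g, if D1 g t ω = true ∧ D1 g (t - 1) ω = true ∧
            Dm g t ω = dm ∧ Dm g (t - 1) ω = dm then
          N g t / Ncnt true true dm t ω * (Y g t ω - Y g (t - 1) ω) else 0)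
        - (∑ g, if D1 g t ω = false ∧ D1 g (t - 1) ω = true ∧
            Dm g t ω = dm ∧ Dm g (t - 1) ω = dm then
          N g t / Ncnt false true dm t ω * (Y g t ω - Y g (t - 1) ω) else 0)
      else 0)
    -- the DID_M estimator
    (DIDM : Ω → ℝ)
    (hDIDM : ∀ ω, DIDM ω =
      if NS ω ≠ 0 then
        ∑ t ∈ Finset.Icc 2 T, ∑ dm : Fin Km1 → Bool,
          (Ncnt true false dm t ω / NS ω * DIDp dm t ω
            + Ncnt false true dm t ω / NS ω * DIDm dm t ω)
      else 0)
    -- the target parameter δ^𝒮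
    (δS : ℝ)
    (hδS : δS = ∫ ω, (if NS ω ≠ 0 then
      (1 / NS ω) * ∑ p ∈ S ω, N p.1 p.2 *
        (po p.1 p.2 true (Dm p.1 p.2 ω) ω - po p.1 p.2 false (Dm p.1 p.2 ω) ω)
      else 0) ∂μ)
    (hDIDMint : Integrable DIDM μ)
    (hδSint : Integrable (fun ω => if NS ω ≠ 0 then
      (1 / NS ω) * ∑ p ∈ S ω, N p.1 p.2 *
        (po p.1 p.2 true (Dm p.1 p.2 ω) ω - po p.1 p.2 false (Dm p.1 p.2 ω) ω)
      else 0) μ) :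
    ∫ ω, DIDM ω ∂μ = δS :=
  DIDM_unbiased_several_treatments_general G T Km1 (inst := inst) μ po hpoint D1 Dm hD1meas hDmmeas
    Y hY mD hmD ψ hψ N hN S hS NS hNS Ncnt hNcnt DIDp DIDm hDIDp hDIDm DIDM hDIDM δS hδS hδSint
end

section
/- In the proof of the DID_M unbiasedness result: let t ≥ 2, 𝐝_{−1} ∈ {0,1}^{K−1} with N_{1,0,𝐝_{−1},t} > 0 and N_{0,0,𝐝_{−1},t} > 0, and suppose E[Y_{g,t}(0,𝐝_{−1}) − Y_{g,t−1}(0,𝐝_{−1})|𝐃] = ψ_{0,𝐝_{−1},t} (the same number for all g). Then N_{1,0,𝐝_{−1},t}·E[DID_{+,𝐝_{−1},t}|𝐃] = Σ_{g: D^1_{g,t}=1, D^1_{g,t−1}=0, D^{-1}_{g,t}=D^{-1}_{g,t−1}=𝐝_{−1}} N_{g,t}·E[Y_{g,t}(1,𝐝_{−1}) − Y_{g,t}(0,𝐝_{−1})|𝐃]. -/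
open Finset MeasureTheory

/-!
For a switcher-in the observed change `Y_{g,t} − Y_{g,t−1}` is the treatment effect
`Y_{g,t}(1,𝐝) − Y_{g,t}(0,𝐝)` plus the untreated trend `Y_{g,t}(0,𝐝) − Y_{g,t−1}(0,𝐝)`; for a
stable-untreated cell it is the untreated trend alone. Taking expectations, both weighted
averages in `DID₊` contain the common trend `ψ` with total weight one, so it cancels, and
multiplying by `N_{1,0,𝐝,t}` clears the denominators of the switchers-in average.
-/

section WeightedAverage

variable {ι : Type*} [Fintype ι] (p : ι → Prop) [DecidablePred p] {w x y : ι → ℝ} {W c : ℝ}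

lemma mul_sum_ite_div_mul (hW : W ≠ 0) :
    W * ∑ i, (if p i then w i / W * x i else 0) = ∑ i, if p i then w i * x i else 0 := by
  rw [mul_sum]
  refine sum_congr rfl fun i _ => ?_
  split_ifs
  · field_simp
  · exact mul_zero W

lemma sum_ite_div_mul_eq_of_forall_eq (hW : W = ∑ i, if p i then w i else 0) (hW0 : W ≠ 0)
    (hx : ∀ i, p i → x i = c) :
    ∑ i, (if p i then w i / W * x i else 0) = c := by
  calc ∑ i, (if p i then w i / W * x i else 0)
      = (∑ i, if p i then w i else 0) / W * c := by
        rw [sum_div, sum_mul]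
        refine sum_congr rfl fun i _ => ?_
        split_ifs with h
        · rw [hx i h]
        · simp
    _ = c := by rw [← hW, div_self hW0, one_mul]

lemma sum_ite_div_mul_eq_add_of_forall_eq_add (hW : W = ∑ i, if p i then w i else 0)
    (hW0 : W ≠ 0) (hx : ∀ i, p i → x i = y i + c) :
    ∑ i, (if p i then w i / W * x i else 0) = (∑ i, if p i then w i / W * y i else 0) + c := by
  have hsplit : ∀ i, (if p i then w i / W * x i else 0)
      = (if p i then w i / W * y i else 0) + if p i then w i / W * c else 0 := fun i => by
    split_ifs with h
    · rw [hx i h, mul_add]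
    · rw [add_zero]
  simp only [hsplit, sum_add_distrib]
  rw [sum_ite_div_mul_eq_of_forall_eq p hW hW0 fun _ _ => rfl]

end WeightedAverage

section Integral

variable {ι Ω : Type*} [Fintype ι] (p : ι → Prop) [DecidablePred p] [MeasurableSpace Ω]
  {μ : Measure Ω} {f : ι → Ω → ℝ}

lemma integrable_sum_ite_const_mul (hf : ∀ i, Integrable (f i) μ) (c : ι → ℝ) :
    Integrable (fun ω => ∑ i, if p i then c i * f i ω else 0) μ := by
  simp only [← ite_zero_mul]
  exact integrable_finsetSum _ fun i _ => (hf i).const_mul _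

lemma integral_sum_ite_const_mul (hf : ∀ i, Integrable (f i) μ) (c : ι → ℝ) :
    ∫ ω, (∑ i, if p i then c i * f i ω else 0) ∂μ
      = ∑ i, if p i then c i * ∫ ω, f i ω ∂μ else 0 := by
  simp only [← ite_zero_mul]
  rw [integral_finsetSum _ fun i _ => (hf i).const_mul _]
  simp only [integral_const_mul]

end Integral

section PotentialOutcomes

variable {Ω β : Type*} [MeasurableSpace Ω] {μ : Measure Ω} {po : ℕ → Bool → β → Ω → ℝ}
  {D : ℕ → Bool} {Dm : ℕ → β} {Y : ℕ → Ω → ℝ} {s s' : ℕ} {e : β}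

lemma integral_sub_of_switch_in (h1 : Integrable (po s true e) μ)
    (h0 : Integrable (po s false e) μ) (h0' : Integrable (po s' false e) μ)
    (hY : ∀ s ω, Y s ω = po s (D s) (Dm s) ω) (hD : D s = true) (hD' : D s' = false)
    (hDm : Dm s = e) (hDm' : Dm s' = e) :
    ∫ ω, (Y s ω - Y s' ω) ∂μ
      = ∫ ω, (po s true e ω - po s false e ω) ∂μ + ∫ ω, (po s false e ω - po s' false e ω) ∂μ := by
  have heffect_add_trend : (fun ω => Y s ω - Y s' ω)
      = fun ω => (po s true e ω - po s false e ω) + (po s false e ω - po s' false e ω) := by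
    funext ω
    rw [hY, hY, hD, hD', hDm, hDm']
    ring
  rw [heffect_add_trend]
  exact integral_add (h1.sub h0) (h0.sub h0')

lemma integral_sub_of_stable_untreated (hY : ∀ s ω, Y s ω = po s (D s) (Dm s) ω)
    (hD : D s = false) (hD' : D s' = false) (hDm : Dm s = e) (hDm' : Dm s' = e) :
    ∫ ω, (Y s ω - Y s' ω) ∂μ = ∫ ω, (po s false e ω - po s' false e ω) ∂μ := by
  simp only [hY, hD, hD', hDm, hDm']

end PotentialOutcomes

theorem DID_plus_identifies_switchers_effect_general
    (G Km1 : ℕ) {Ω : Type*} [MeasurableSpace Ω]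
    (μ : Measure Ω)
    (po : Fin G → ℕ → Bool → (Fin Km1 → Bool) → Ω → ℝ)
    (hint : ∀ g t d dm, Integrable (po g t d dm) μ)
    (D1 : Fin G → ℕ → Bool) (Dm : Fin G → ℕ → Fin Km1 → Bool)
    (Y : Fin G → ℕ → Ω → ℝ)
    (hY : ∀ g t ω, Y g t ω = po g t (D1 g t) (Dm g t) ω)
    (N : Fin G → ℕ → ℝ)
    (t : ℕ)
    (dm : Fin Km1 → Bool)
    (N10 N00 : ℝ)
    (hN10 : N10 = ∑ g, if D1 g t = true ∧ D1 g (t - 1) = false ∧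
        Dm g t = dm ∧ Dm g (t - 1) = dm then N g t else 0)
    (hN00 : N00 = ∑ g, if D1 g t = false ∧ D1 g (t - 1) = false ∧
        Dm g t = dm ∧ Dm g (t - 1) = dm then N g t else 0)
    (hN10pos : 0 < N10) (hN00pos : 0 < N00)
    (ψ : ℝ)
    (hψ : ∀ g, ∫ ω, (po g t false dm ω - po g (t - 1) false dm ω) ∂μ = ψ)
    (DIDplus : Ω → ℝ)
    (hDIDplus : ∀ ω, DIDplus ω =
      (∑ g, if D1 g t = true ∧ D1 g (t - 1) = false ∧
          Dm g t = dm ∧ Dm g (t - 1) = dm then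
        N g t / N10 * (Y g t ω - Y g (t - 1) ω) else 0)
      - ∑ g, if D1 g t = false ∧ D1 g (t - 1) = false ∧
          Dm g t = dm ∧ Dm g (t - 1) = dm then
        N g t / N00 * (Y g t ω - Y g (t - 1) ω) else 0) :
    N10 * ∫ ω, DIDplus ω ∂μ =
      ∑ g, if D1 g t = true ∧ D1 g (t - 1) = false ∧
          Dm g t = dm ∧ Dm g (t - 1) = dm then
        N g t * ∫ ω, (po g t true dm ω - po g t false dm ω) ∂μ else 0 := by
  have hYint : ∀ g s, Integrable (Y g s) μ := fun g s =>
    (hint g s _ _).congr (ae_of_all _ fun ω => (hY g s ω).symm)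
  have hΔint : ∀ g, Integrable (fun ω => Y g t ω - Y g (t - 1) ω) μ :=
    fun g => (hYint g t).sub (hYint g (t - 1))
  have hswitch : ∀ g, (D1 g t = true ∧ D1 g (t - 1) = false ∧ Dm g t = dm ∧ Dm g (t - 1) = dm) →
      ∫ ω, (Y g t ω - Y g (t - 1) ω) ∂μ
        = ∫ ω, (po g t true dm ω - po g t false dm ω) ∂μ + ψ := fun g ⟨h1, h0, hm1, hm0⟩ => by
    rw [integral_sub_of_switch_in (hint g _ _ _) (hint g _ _ _) (hint g _ _ _) (hY g) h1 h0 hm1 hm0,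
      hψ g]
  have hstable : ∀ g, (D1 g t = false ∧ D1 g (t - 1) = false ∧ Dm g t = dm ∧ Dm g (t - 1) = dm) →
      ∫ ω, (Y g t ω - Y g (t - 1) ω) ∂μ = ψ := fun g ⟨h1, h0, hm1, hm0⟩ => by
    rw [integral_sub_of_stable_untreated (hY g) h1 h0 hm1 hm0, hψ g]
  rw [integral_congr_ae (ae_of_all _ hDIDplus),
    integral_sub (integrable_sum_ite_const_mul _ hΔint _) (integrable_sum_ite_const_mul _ hΔint _),
    integral_sum_ite_const_mul _ hΔint, integral_sum_ite_const_mul _ hΔint,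
    sum_ite_div_mul_eq_add_of_forall_eq_add _ hN10 hN10pos.ne' hswitch,
    sum_ite_div_mul_eq_of_forall_eq _ hN00 hN00pos.ne' hstable, add_sub_cancel_right,
    mul_sum_ite_div_mul _ hN10pos.ne']

/-- Key step in the proof of the unbiasedness of `DID_M`.
In a sharp design with `K` binary treatments (first treatment `D¹`, other
treatments `Dm` with values in `{0,1}^{K−1}`), fix `t ≥ 2` and a value `dm` of
the other treatments with positive weights `N_{1,0,dm,t}` and `N_{0,0,dm,t}` of
switchers-in and stable-untreated cells. If the never-switching potential
outcome trend `E[Y_{g,t}(0,dm) − Y_{g,t−1}(0,dm)]` equals the same number `ψ`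
for all `g`, then `N_{1,0,dm,t}·E[DID₊]` equals the weighted sum over
switchers-in of the average effect of moving the first treatment from 0 to 1. -/
theorem DID_plus_identifies_switchers_effect
    (G T Km1 : ℕ) {Ω : Type*} [MeasurableSpace Ω]
    (μ : Measure Ω) [IsProbabilityMeasure μ]
    (po : Fin G → ℕ → Bool → (Fin Km1 → Bool) → Ω → ℝ)
    (hmeas : ∀ g t d dm, Measurable (po g t d dm))
    (hint : ∀ g t d dm, Integrable (po g t d dm) μ)
    (D1 : Fin G → ℕ → Bool) (Dm : Fin G → ℕ → Fin Km1 → Bool)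
    (Y : Fin G → ℕ → Ω → ℝ)
    (hY : ∀ g t ω, Y g t ω = po g t (D1 g t) (Dm g t) ω)
    (N : Fin G → ℕ → ℝ) (hN : ∀ g t, 0 < N g t)
    (t : ℕ) (ht2 : 2 ≤ t) (htT : t ≤ T)
    (dm : Fin Km1 → Bool)
    (N10 N00 : ℝ)
    (hN10 : N10 = ∑ g, if D1 g t = true ∧ D1 g (t - 1) = false ∧
        Dm g t = dm ∧ Dm g (t - 1) = dm then N g t else 0)
    (hN00 : N00 = ∑ g, if D1 g t = false ∧ D1 g (t - 1) = false ∧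
        Dm g t = dm ∧ Dm g (t - 1) = dm then N g t else 0)
    (hN10pos : 0 < N10) (hN00pos : 0 < N00)
    (ψ : ℝ)
    (hψ : ∀ g, ∫ ω, (po g t false dm ω - po g (t - 1) false dm ω) ∂μ = ψ)
    (DIDplus : Ω → ℝ)
    (hDIDplus : ∀ ω, DIDplus ω =
      (∑ g, if D1 g t = true ∧ D1 g (t - 1) = false ∧
          Dm g t = dm ∧ Dm g (t - 1) = dm then
        N g t / N10 * (Y g t ω - Y g (t - 1) ω) else 0)
      - ∑ g, if D1 g t = false ∧ D1 g (t - 1) = false ∧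
          Dm g t = dm ∧ Dm g (t - 1) = dm then
        N g t / N00 * (Y g t ω - Y g (t - 1) ω) else 0) :
    N10 * ∫ ω, DIDplus ω ∂μ =
      ∑ g, if D1 g t = true ∧ D1 g (t - 1) = false ∧
          Dm g t = dm ∧ Dm g (t - 1) = dm then
        N g t * ∫ ω, (po g t true dm ω - po g t false dm ω) ∂μ else 0 :=
  DID_plus_identifies_switchers_effect_general G Km1 μ po hint D1 Dm Y hY N t dm N10 N00 hN10 hN00
    hN10pos hN00pos ψ hψ DIDplus hDIDplus
end

section
/- Let a_g, b_t > 0 with Σ_{g=1}^G a_g = Σ_{t=1}^T b_t = 1, and define for k∈{1,2}: I^k_g = 1{g ≥ G^k}, J^k_t = 1{t ≥ T^k}, p^k_G = Σ_g a_g I^k_g, p^k_T = Σ_t b_t J^k_t, with 1 < G^1 < G^2 ≤ G, 1 < T^1 < T^2 ≤ T. Define ζ = (1−p^1_G)(1−p^1_T)/((1−p^2_G)(1−p^2_T)) and ε_{g,t} = (I^1_g − p^1_G)(J^1_t − p^1_T) − ζ·(I^2_g − p^2_G)(J^2_t − p^2_T). Then Σ_{g,t} a_g b_t ε_{g,t}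 I^2_g J^2_t = 0, Σ_t b_t ε_{g,t} = 0 for every g, and Σ_g a_g ε_{g,t} = 0 for every t. -/
/-!
`ε` is a difference of two products of a centred indicator in `g` and a centred indicator in
`t`. Summing over `t` (or over `g`) with the weights kills every centred factor, which gives the
equations for the group and time dummies. Against `I²_g J²_t` the nesting `I¹ ≥ I²` turns each
product into `(1 - p^k_G) p²_G (1 - p^k_T) p²_T`, and `ζ` is exactly the ratio that makes the two
terms cancel.
-/

open Finset

section WeightedSums

variable {ι κ : Type*} {s : Finset ι} {w : ι → ℝ}

theorem sum_mul_sub_weighted_mean (hw : ∑ x ∈ s, w x = 1) (f : ι → ℝ) :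
    ∑ x ∈ s, w x * (f x - ∑ y ∈ s, w y * f y) = 0 := by
  simp only [mul_sub, sum_sub_distrib, ← sum_mul, hw, one_mul, sub_self]

theorem sum_mul_eq_zero_of_eq_centered (hw : ∑ x ∈ s, w x = 1) {e v₁ v₂ : ι → ℝ}
    {u₁ u₂ c : ℝ}
    (he : ∀ x, e x = u₁ * (v₁ x - ∑ y ∈ s, w y * v₁ y)
      - c * (u₂ * (v₂ x - ∑ y ∈ s, w y * v₂ y))) :
    ∑ x ∈ s, w x * e x = 0 := by
  calc ∑ x ∈ s, w x * e x
      = u₁ * ∑ x ∈ s, w x * (v₁ x - ∑ y ∈ s, w y * v₁ y)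
        - c * (u₂ * ∑ x ∈ s, w x * (v₂ x - ∑ y ∈ s, w y * v₂ y)) := by
        simp only [mul_sum, ← sum_sub_distrib]
        exact sum_congr rfl fun x _ => by rw [he]; ring
    _ = 0 := by simp only [sum_mul_sub_weighted_mean hw, mul_zero, sub_zero]

theorem sum_mul_sub_mul_of_mul_eq {I J : ι → ℝ} (c : ℝ) (h : ∀ x, I x * J x = J x) :
    ∑ x ∈ s, w x * ((I x - c) * J x) = (1 - c) * ∑ x ∈ s, w x * J x := by
  rw [mul_sum]
  exact sum_congr rfl fun x _ => by linear_combination w x * h x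

theorem one_sub_weighted_sum_eq_zero_of_le {I₁ I₂ : ι → ℝ} (hw₀ : ∀ x ∈ s, 0 ≤ w x)
    (hw : ∑ x ∈ s, w x = 1) (h₂₁ : ∀ x, I₂ x ≤ I₁ x) (h₁ : ∀ x, I₁ x ≤ 1)
    (h : 1 - ∑ x ∈ s, w x * I₂ x = 0) : 1 - ∑ x ∈ s, w x * I₁ x = 0 := by
  have h₂₁' : ∑ x ∈ s, w x * I₂ x ≤ ∑ x ∈ s, w x * I₁ x :=
    sum_le_sum fun x hx => mul_le_mul_of_nonneg_left (h₂₁ x) (hw₀ x hx)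
  have h₁' : ∑ x ∈ s, w x * I₁ x ≤ ∑ x ∈ s, w x := by
    refine sum_le_sum fun x hx => ?_
    simpa using mul_le_mul_of_nonneg_left (h₁ x) (hw₀ x hx)
  linarith

theorem sum_sum_mul_mul_eq_of_eq_sub {u : Finset κ} {a : ι → ℝ} {b : κ → ℝ}
    {ε : ι → κ → ℝ} {A₁ A₂ I : ι → ℝ} {B₁ B₂ J : κ → ℝ} {c : ℝ}
    (hε : ∀ g t, ε g t = A₁ g * B₁ t - c * (A₂ g * B₂ t)) :
    ∑ g ∈ s, ∑ t ∈ u, a g * b t * ε g t * (I g * J t)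
      = (∑ g ∈ s, a g * (A₁ g * I g)) * (∑ t ∈ u, b t * (B₁ t * J t))
        - c * ((∑ g ∈ s, a g * (A₂ g * I g)) * (∑ t ∈ u, b t * (B₂ t * J t))) := by
  rw [sum_mul_sum, sum_mul_sum, mul_sum, ← sum_sub_distrib]
  refine sum_congr rfl fun g _ => ?_
  rw [mul_sum, ← sum_sub_distrib]
  exact sum_congr rfl fun t _ => by rw [hε]; ring

end WeightedSums

section StepFunctions

variable {K₁ K₂ : ℕ} {I₁ I₂ : ℕ → ℝ}

theorem step_mul_step_of_le (hI₁ : ∀ x, I₁ x = if K₁ ≤ x then 1 else 0)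
    (hI₂ : ∀ x, I₂ x = if K₂ ≤ x then 1 else 0) (hK : K₁ ≤ K₂) (x : ℕ) :
    I₁ x * I₂ x = I₂ x := by
  rw [hI₁, hI₂]
  split_ifs <;> first | omega | norm_num

theorem step_le_step_of_le (hI₁ : ∀ x, I₁ x = if K₁ ≤ x then 1 else 0)
    (hI₂ : ∀ x, I₂ x = if K₂ ≤ x then 1 else 0) (hK : K₁ ≤ K₂) (x : ℕ) :
    I₂ x ≤ I₁ x := by
  rw [hI₁, hI₂]
  split_ifs <;> first | omega | norm_num

theorem step_le_one (hI₁ : ∀ x, I₁ x = if K₁ ≤ x then 1 else 0) (x : ℕ) : I₁ x ≤ 1 := by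
  rw [hI₁]
  split_ifs <;> norm_num

end StepFunctions

theorem closed_form_residual_satisfies_normal_equations_general
    (G T G1 G2 T1 T2 : ℕ)
    (hG12 : G1 < G2)
    (hT12 : T1 < T2)
    (a b : ℕ → ℝ)
    (ha : ∀ g ∈ Finset.Icc 1 G, 0 < a g) (hb : ∀ t ∈ Finset.Icc 1 T, 0 < b t)
    (hsa : ∑ g ∈ Finset.Icc 1 G, a g = 1) (hsb : ∑ t ∈ Finset.Icc 1 T, b t = 1)
    (I1 I2 J1 J2 : ℕ → ℝ)
    (hI1 : ∀ g, I1 g = if G1 ≤ g then 1 else 0)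
    (hI2 : ∀ g, I2 g = if G2 ≤ g then 1 else 0)
    (hJ1 : ∀ t, J1 t = if T1 ≤ t then 1 else 0)
    (hJ2 : ∀ t, J2 t = if T2 ≤ t then 1 else 0)
    (p1G p2G p1T p2T : ℝ)
    (hp1G : p1G = ∑ g ∈ Finset.Icc 1 G, a g * I1 g)
    (hp2G : p2G = ∑ g ∈ Finset.Icc 1 G, a g * I2 g)
    (hp1T : p1T = ∑ t ∈ Finset.Icc 1 T, b t * J1 t)
    (hp2T : p2T = ∑ t ∈ Finset.Icc 1 T, b t * J2 t)
    (ζ : ℝ) (hζ : ζ = (1 - p1G) * (1 - p1T) / ((1 - p2G) * (1 - p2T)))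
    (ε : ℕ → ℕ → ℝ)
    (hε : ∀ g t, ε g t =
      (I1 g - p1G) * (J1 t - p1T) - ζ * ((I2 g - p2G) * (J2 t - p2T))) :
    (∑ g ∈ Finset.Icc 1 G, ∑ t ∈ Finset.Icc 1 T,
        a g * b t * ε g t * (I2 g * J2 t) = 0)
    ∧ (∀ g ∈ Finset.Icc 1 G, ∑ t ∈ Finset.Icc 1 T, b t * ε g t = 0)
    ∧ (∀ t ∈ Finset.Icc 1 T, ∑ g ∈ Finset.Icc 1 G, a g * ε g t = 0) := by
  subst hp1G hp2G hp1T hp2T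
  -- `1 - p¹ ≤ 1 - p²`, so `ζ` inverts the denominator even where `/` returns its junk value `0`.
  have hζ' : ζ * ((1 - ∑ g ∈ Icc 1 G, a g * I2 g) * (1 - ∑ t ∈ Icc 1 T, b t * J2 t))
      = (1 - ∑ g ∈ Icc 1 G, a g * I1 g) * (1 - ∑ t ∈ Icc 1 T, b t * J1 t) := by
    refine hζ ▸ div_mul_cancel_of_imp fun h => ?_
    rcases mul_eq_zero.1 h with hG | hT
    · rw [one_sub_weighted_sum_eq_zero_of_le (fun g hg => (ha g hg).le) hsa
        (step_le_step_of_le hI1 hI2 hG12.le) (step_le_one hI1) hG, zero_mul]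
    · rw [one_sub_weighted_sum_eq_zero_of_le (fun t ht => (hb t ht).le) hsb
        (step_le_step_of_le hJ1 hJ2 hT12.le) (step_le_one hJ1) hT, mul_zero]
  refine ⟨?_, fun g _ => sum_mul_eq_zero_of_eq_centered hsb (hε g),
    fun t _ => sum_mul_eq_zero_of_eq_centered hsa fun g => by
      rw [hε, mul_comm (I1 g - _), mul_comm (I2 g - _)]⟩
  rw [sum_sum_mul_mul_eq_of_eq_sub hε,
    sum_mul_sub_mul_of_mul_eq _ (step_mul_step_of_le hI1 hI2 hG12.le),
    sum_mul_sub_mul_of_mul_eq _ (step_mul_step_of_le hI2 hI2 le_rfl),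
    sum_mul_sub_mul_of_mul_eq _ (step_mul_step_of_le hJ1 hJ2 hT12.le),
    sum_mul_sub_mul_of_mul_eq _ (step_mul_step_of_le hJ2 hJ2 le_rfl)]
  linear_combination (-(∑ g ∈ Icc 1 G, a g * I2 g) * ∑ t ∈ Icc 1 T, b t * J2 t) * hζ'

/-- Algebraic verification that the closed-form residual candidate
`ε_{g,t} = (I¹_g−p¹_G)(J¹_t−p¹_T) − ζ(I²_g−p²_G)(J²_t−p²_T)` with
`ζ = (1−p¹_G)(1−p¹_T)/((1−p²_G)(1−p²_T))` satisfies all the weighted least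
squares normal equations: orthogonality to `D²_{g,t}=I²_gJ²_t` and to the group
and time dummies, under weights proportional to `a_g b_t`. -/
theorem closed_form_residual_satisfies_normal_equations
    (G T G1 G2 T1 T2 : ℕ)
    (hG1 : 1 < G1) (hG12 : G1 < G2) (hG2 : G2 ≤ G)
    (hT1 : 1 < T1) (hT12 : T1 < T2) (hT2 : T2 ≤ T)
    (a b : ℕ → ℝ)
    (ha : ∀ g ∈ Finset.Icc 1 G, 0 < a g) (hb : ∀ t ∈ Finset.Icc 1 T, 0 < b t)
    (hsa : ∑ g ∈ Finset.Icc 1 G, a g = 1) (hsb : ∑ t ∈ Finset.Icc 1 T, b t = 1)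
    (I1 I2 J1 J2 : ℕ → ℝ)
    (hI1 : ∀ g, I1 g = if G1 ≤ g then 1 else 0)
    (hI2 : ∀ g, I2 g = if G2 ≤ g then 1 else 0)
    (hJ1 : ∀ t, J1 t = if T1 ≤ t then 1 else 0)
    (hJ2 : ∀ t, J2 t = if T2 ≤ t then 1 else 0)
    (p1G p2G p1T p2T : ℝ)
    (hp1G : p1G = ∑ g ∈ Finset.Icc 1 G, a g * I1 g)
    (hp2G : p2G = ∑ g ∈ Finset.Icc 1 G, a g * I2 g)
    (hp1T : p1T = ∑ t ∈ Finset.Icc 1 T, b t * J1 t)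
    (hp2T : p2T = ∑ t ∈ Finset.Icc 1 T, b t * J2 t)
    (ζ : ℝ) (hζ : ζ = (1 - p1G) * (1 - p1T) / ((1 - p2G) * (1 - p2T)))
    (ε : ℕ → ℕ → ℝ)
    (hε : ∀ g t, ε g t =
      (I1 g - p1G) * (J1 t - p1T) - ζ * ((I2 g - p2G) * (J2 t - p2T))) :
    (∑ g ∈ Finset.Icc 1 G, ∑ t ∈ Finset.Icc 1 T,
        a g * b t * ε g t * (I2 g * J2 t) = 0)
    ∧ (∀ g ∈ Finset.Icc 1 G, ∑ t ∈ Finset.Icc 1 T, b t * ε g t = 0)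
    ∧ (∀ t ∈ Finset.Icc 1 T, ∑ g ∈ Finset.Icc 1 G, a g * ε g t = 0) :=
  closed_form_residual_satisfies_normal_equations_general G T G1 G2 T1 T2 hG12 hT12 a b ha hb hsa
    hsb I1 I2 J1 J2 hI1 hI2 hJ1 hJ2 p1G p2G p1T p2T hp1G hp2G hp1T hp2T ζ hζ ε hε
end
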